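/- arXiv:1803.06446 — 11 statements merged into one kernel-verified Lean document; each statement's English description precedes it below -/
import Mathlib

section
/- Let X ⊂ ℝⁿ be a nonempty convex compact set, A an m×n real matrix, B a ν×n real matrix, ‖·‖ a norm on ℝ^ν, ε ∈ (0,1), and for each x ∈ X let P_x be a Borel probability distribution on ℝᵐ. Let H = [h₁,…,h_N] be an m×N matrix such that for every x ∈ X and every ℓ ≤ N one has P_x({ξ : |h_ℓᵀξ| > 1}) ≤ ε/N. Let x̂^H : ℝᵐ → X be any measurable map satisfying ‖Hᵀω − HᵀA x̂^H(ω)‖_∞ = min_{u∈X} ‖Hᵀω − HᵀAu‖_∞ for all ω, and set ŵ^H(ω) = B x̂^H(ω). Then for every x ∈ X, P_{ξ∼P_x}({ξ : ‖Bx − ŵ^H(Ax+ξ)‖ > 𝔐[H]}) ≤ ε, where 𝔐[H] = max{‖Bz‖ : z ∈ 2X_s, ‖HᵀAz‖_∞ ≤ 2}. -/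
/-!
On the event `‖Hᵀξ‖_∞ ≤ 1` the true signal `x` is a feasible point with residual
`‖Hᵀξ‖_∞ ≤ 1`, so the minimizer `x̂` has residual at most `1` as well, and the triangle
inequality gives `‖HᵀA(x - x̂)‖_∞ ≤ 2`. As `x - x̂ ∈ X - X = 2X_s`, the error
`‖B(x - x̂)‖` is then at most `𝔐[H]`. The complementary event is the union of the `N` events
`|hℓᵀξ| > 1`, of total probability at most `N · ε/N = ε`.
-/

open MeasureTheory Matrix

theorem measure_iUnion_le_ofReal_of_le_div_card {α ι : Type*} [MeasurableSpace α] [Fintype ι]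
    (μ : Measure α) (s : ι → Set α) (ε : ℝ)
    (hs : ∀ i, μ (s i) ≤ ENNReal.ofReal (ε / Fintype.card ι)) :
    μ (⋃ i, s i) ≤ ENNReal.ofReal ε := by
  rcases isEmpty_or_nonempty ι with hι | hι
  · simp
  have hcard : (Fintype.card ι : ℝ) ≠ 0 := by positivity
  calc μ (⋃ i, s i) ≤ ∑ i, μ (s i) := measure_iUnion_fintype_le μ s
    _ ≤ ∑ _i : ι, ENNReal.ofReal (ε / Fintype.card ι) := Finset.sum_le_sum fun i _ => hs i
    _ = ENNReal.ofReal (Fintype.card ι * (ε / Fintype.card ι)) := by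
        rw [Finset.sum_const, Finset.card_univ, nsmul_eq_mul, ENNReal.ofReal_mul (by positivity),
          ENNReal.ofReal_natCast]
    _ = ENNReal.ofReal ε := by rw [mul_div_cancel₀ ε hcard]

theorem setOf_lt_norm_mulVec_eq_iUnion {ρ κ : Type*} [Fintype ρ] [Fintype κ]
    (M : Matrix ρ κ ℝ) {r : ℝ} (hr : 0 ≤ r) :
    {ξ | r < ‖M *ᵥ ξ‖} = ⋃ i, {ξ | r < |M i ⬝ᵥ ξ|} := by
  ext ξ
  simp only [Set.mem_ofPred_eq, Set.mem_iUnion, ← not_le, pi_norm_le_iff_of_nonneg hr,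
    not_forall, Real.norm_eq_abs, mulVec]

theorem norm_sub_le_two_mul_of_norm_sub_le {E : Type*} [SeminormedAddCommGroup E] {a b ω : E}
    (hb : ‖ω - b‖ ≤ ‖ω - a‖) : ‖a - b‖ ≤ 2 * ‖ω - a‖ :=
  calc ‖a - b‖ ≤ ‖a - ω‖ + ‖ω - b‖ := norm_sub_le_norm_sub_add_norm_sub a ω b
    _ ≤ 2 * ‖ω - a‖ := by rw [norm_sub_rev a ω]; linarith

theorem error_le_of_norm_mulVec_noise_le_one {ι κ ρ σ : Type*} [Fintype ι] [Fintype κ]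
    [Fintype ρ] {X : Set (ι → ℝ)} {A : Matrix κ ι ℝ} {M : Matrix ρ κ ℝ} {B : Matrix σ ι ℝ}
    {nrm : (σ → ℝ) → ℝ} {c : ℝ}
    (hc : ∀ x ∈ X, ∀ y ∈ X, ‖M *ᵥ (A *ᵥ (x - y))‖ ≤ 2 → nrm (B *ᵥ (x - y)) ≤ c)
    {x u : ι → ℝ} (hx : x ∈ X) (hu : u ∈ X) {ξ : κ → ℝ} (hξ : ‖M *ᵥ ξ‖ ≤ 1)
    (hmin : ‖M *ᵥ (A *ᵥ x + ξ) - M *ᵥ (A *ᵥ u)‖ ≤ ‖M *ᵥ (A *ᵥ x + ξ) - M *ᵥ (A *ᵥ x)‖) :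
    nrm (B *ᵥ x - B *ᵥ u) ≤ c := by
  have hresidual : M *ᵥ (A *ᵥ x + ξ) - M *ᵥ (A *ᵥ x) = M *ᵥ ξ := by
    rw [mulVec_add, add_sub_cancel_left]
  rw [← mulVec_sub]
  refine hc x hx u hu ?_
  calc ‖M *ᵥ (A *ᵥ (x - u))‖ = ‖M *ᵥ (A *ᵥ x) - M *ᵥ (A *ᵥ u)‖ := by
        rw [mulVec_sub, mulVec_sub]
    _ ≤ 2 * ‖M *ᵥ ξ‖ := hresidual ▸ norm_sub_le_two_mul_of_norm_sub_le hmin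
    _ ≤ 2 := by linarith

theorem stmt0_general
    {n m ν N : ℕ}
    (X : Set (Fin n → ℝ))
    (A : Matrix (Fin m) (Fin n) ℝ) (B : Matrix (Fin ν) (Fin n) ℝ)
    (nrm : (Fin ν → ℝ) → ℝ)
    (ε : ℝ)
    (P : (Fin n → ℝ) → Measure (Fin m → ℝ))
    (H : Matrix (Fin m) (Fin N) ℝ)
    (hH : ∀ x ∈ X, ∀ ℓ : Fin N,
      P x {ξ | 1 < |Hᵀ ℓ ⬝ᵥ ξ|} ≤ ENNReal.ofReal (ε / N))
    (xhat : (Fin m → ℝ) → (Fin n → ℝ))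
    (hxhatX : ∀ ω, xhat ω ∈ X)
    -- `x̂(ω)` minimizes `u ↦ ‖Hᵀω − HᵀAu‖_∞` over `X` (the Pi norm on `Fin N → ℝ`
    -- is the sup norm)
    (hxhatmin : ∀ ω, ∀ u ∈ X,
      ‖Hᵀ.mulVec ω - Hᵀ.mulVec (A.mulVec (xhat ω))‖ ≤ ‖Hᵀ.mulVec ω - Hᵀ.mulVec (A.mulVec u)‖)
    (𝔐 : ℝ)
    (h𝔐 : IsGreatest {c | ∃ x ∈ X, ∃ y ∈ X,
        ‖Hᵀ.mulVec (A.mulVec (x - y))‖ ≤ 2 ∧ c = nrm (B.mulVec (x - y))} 𝔐) :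
    ∀ x ∈ X,
      P x {ξ | 𝔐 < nrm (B.mulVec x - B.mulVec (xhat (A.mulVec x + ξ)))}
        ≤ ENNReal.ofReal ε := by
  intro x hx
  have h𝔐_bound : ∀ x ∈ X, ∀ y ∈ X,
      ‖Hᵀ *ᵥ (A *ᵥ (x - y))‖ ≤ 2 → nrm (B *ᵥ (x - y)) ≤ 𝔐 :=
    fun x hx y hy h => h𝔐.2 ⟨x, hx, y, hy, h, rfl⟩
  have hbad : {ξ | 𝔐 < nrm (B *ᵥ x - B *ᵥ xhat (A *ᵥ x + ξ))} ⊆ {ξ | 1 < ‖Hᵀ *ᵥ ξ‖} := by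
    intro ξ
    simp only [Set.mem_ofPred_eq]
    contrapose!
    exact fun hξ => error_le_of_norm_mulVec_noise_le_one h𝔐_bound hx (hxhatX _) hξ
      (hxhatmin _ x hx)
  rw [setOf_lt_norm_mulVec_eq_iUnion Hᵀ zero_le_one] at hbad
  refine (measure_mono hbad).trans (measure_iUnion_le_ofReal_of_le_div_card _ _ ε fun ℓ => ?_)
  simpa using hH x hx ℓ

/-- Risk bound for the generic polyhedral estimate.  Given a contrast
matrix `H` whose columns `hℓ` satisfy `P_x {ξ : |hℓᵀξ| > 1} ≤ ε/N` for all signals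
`x ∈ X`, any minimizer `x̂` of `u ↦ ‖Hᵀω − HᵀAu‖_∞` over `X` yields an estimate
`ŵ = B x̂` whose error exceeds `𝔐[H] = max{‖Bz‖ : z ∈ 2X_s, ‖HᵀAz‖_∞ ≤ 2}` with
probability at most `ε`.  Here `2X_s = X − X`. -/
theorem stmt0
    {n m ν N : ℕ} (hN : 0 < N)
    (X : Set (Fin n → ℝ)) (hXne : X.Nonempty) (hXconv : Convex ℝ X) (hXcomp : IsCompact X)
    (A : Matrix (Fin m) (Fin n) ℝ) (B : Matrix (Fin ν) (Fin n) ℝ)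
    (nrm : (Fin ν → ℝ) → ℝ)
    (nrm_add : ∀ u v, nrm (u + v) ≤ nrm u + nrm v)
    (nrm_smul : ∀ (c : ℝ) u, nrm (c • u) = |c| * nrm u)
    (nrm_eq_zero : ∀ u, nrm u = 0 ↔ u = 0)
    (ε : ℝ) (hε : ε ∈ Set.Ioo (0 : ℝ) 1)
    (P : (Fin n → ℝ) → Measure (Fin m → ℝ))
    (hP : ∀ x ∈ X, IsProbabilityMeasure (P x))
    (H : Matrix (Fin m) (Fin N) ℝ)
    (hH : ∀ x ∈ X, ∀ ℓ : Fin N,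
      P x {ξ | 1 < |Hᵀ ℓ ⬝ᵥ ξ|} ≤ ENNReal.ofReal (ε / N))
    (xhat : (Fin m → ℝ) → (Fin n → ℝ)) (hmeas : Measurable xhat)
    (hxhatX : ∀ ω, xhat ω ∈ X)
    -- `x̂(ω)` minimizes `u ↦ ‖Hᵀω − HᵀAu‖_∞` over `X` (the Pi norm on `Fin N → ℝ`
    -- is the sup norm)
    (hxhatmin : ∀ ω, ∀ u ∈ X,
      ‖Hᵀ.mulVec ω - Hᵀ.mulVec (A.mulVec (xhat ω))‖ ≤ ‖Hᵀ.mulVec ω - Hᵀ.mulVec (A.mulVec u)‖)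
    (𝔐 : ℝ)
    (h𝔐 : IsGreatest {c | ∃ x ∈ X, ∃ y ∈ X,
        ‖Hᵀ.mulVec (A.mulVec (x - y))‖ ≤ 2 ∧ c = nrm (B.mulVec (x - y))} 𝔐) :
    ∀ x ∈ X,
      P x {ξ | 𝔐 < nrm (B.mulVec x - B.mulVec (xhat (A.mulVec x + ξ)))}
        ≤ ENNReal.ofReal ε :=
  stmt0_general X A B nrm ε P H hH xhat hxhatX hxhatmin 𝔐 h𝔐
end

section
/- Let X ⊂ ℝⁿ be a nonempty convex compact set with symmetrization X_s = (1/2)(X − X), A an m×n matrix, B a ν×n matrix with rows B₁ᵀ,…,B_νᵀ, and let r, ρ ∈ [1,∞]. Let γ₁,…,γ_ν > 0 be such that B X_s ⊆ {y ∈ ℝ^ν : ‖Diag(γ)y‖_ρ ≤ 1}. Let H = [H₁,…,H_ν] with blocks H_ℓ ∈ ℝ^{m×m_ℓ}, and let ς₁,…,ς_ν > 0 satisfy max{B_ℓᵀx : x ∈ X_s, ‖H_ℓᵀAx‖_∞ ≤ 1} ≤ ς_ℓ for each ℓ ≤ ν. Then 𝔐[H] := max{‖Bz‖_r : z ∈ 2X_s,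 ‖HᵀAz‖_∞ ≤ 2} ≤ Ψ(ς) := 2 max{‖[v₁/γ₁;…;v_ν/γ_ν]‖_r : ‖v‖_ρ ≤ 1, 0 ≤ v_ℓ ≤ γ_ℓ ς_ℓ for all ℓ ≤ ν}. -/
open Matrix
open scoped ENNReal

/-- The `ℓ_p` norm on `Fin n → ℝ` for `p ∈ [1,∞]` (given as `p : ℝ≥0∞`). -/
noncomputable def lpNorm {n : ℕ} (p : ℝ≥0∞) (x : Fin n → ℝ) : ℝ :=
  if p = ∞ then ⨆ i, |x i| else (∑ i, |x i| ^ p.toReal) ^ (1 / p.toReal)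

lemma lpNorm_nonneg {n : ℕ} (p : ℝ≥0∞) (x : Fin n → ℝ) : 0 ≤ lpNorm p x := by
  unfold lpNorm
  split
  · exact Real.iSup_nonneg fun i => abs_nonneg _
  · positivity

lemma lpNorm_mono {n : ℕ} (p : ℝ≥0∞) {x y : Fin n → ℝ} (h : ∀ i, |x i| ≤ |y i|) :
    lpNorm p x ≤ lpNorm p y := by
  unfold lpNorm
  split
  · exact Real.iSup_le (fun i => le_trans (h i)
      (le_ciSup (f := fun i => |y i|) (Set.Finite.bddAbove (Set.finite_range _)) i))
      (Real.iSup_nonneg fun i => abs_nonneg _)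
  · refine Real.rpow_le_rpow (by positivity) ?_ (by positivity)
    exact Finset.sum_le_sum fun i _ =>
      Real.rpow_le_rpow (abs_nonneg _) (h i) ENNReal.toReal_nonneg

lemma lpNorm_abs {n : ℕ} (p : ℝ≥0∞) (x : Fin n → ℝ) :
    lpNorm p (fun i => |x i|) = lpNorm p x :=
  le_antisymm (lpNorm_mono p fun i => by simp) (lpNorm_mono p fun i => by simp)

lemma lpNorm_toReal_pos {p : ℝ≥0∞} (hp : 1 ≤ p) (hptop : p ≠ ∞) : 0 < p.toReal :=
  ENNReal.toReal_pos (zero_lt_one.trans_le hp).ne' hptop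

lemma lpNorm_zero {n : ℕ} {p : ℝ≥0∞} (hp : 1 ≤ p) : lpNorm p (fun _ : Fin n => (0:ℝ)) = 0 := by
  unfold lpNorm
  split
  · refine le_antisymm (Real.iSup_le (fun i => by simp) le_rfl)
      (Real.iSup_nonneg fun i => abs_nonneg _)
  · rw [show (∑ _i : Fin n, |(0:ℝ)| ^ p.toReal) = 0 by simp [Real.zero_rpow (lpNorm_toReal_pos hp (by assumption)).ne']]
    exact Real.zero_rpow (one_div_pos.mpr (lpNorm_toReal_pos hp (by assumption))).ne'

lemma lpNorm_two_smul {n : ℕ} {p : ℝ≥0∞} (hp : 1 ≤ p) (x : Fin n → ℝ) :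
    lpNorm p (fun i => 2 * x i) = 2 * lpNorm p x := by
  unfold lpNorm
  split
  · simp_rw [abs_mul, abs_of_nonneg (by norm_num : (0:ℝ) ≤ 2)]
    exact (Real.mul_iSup_of_nonneg (by norm_num) _).symm
  · have ht : 0 < p.toReal := lpNorm_toReal_pos hp (by assumption)
    simp_rw [abs_mul, abs_of_nonneg (by norm_num : (0:ℝ) ≤ 2),
      Real.mul_rpow (by norm_num : (0:ℝ) ≤ 2) (abs_nonneg _)]
    rw [← Finset.mul_sum, Real.mul_rpow (by positivity) (by positivity),
      ← Real.rpow_mul (by norm_num : (0:ℝ) ≤ 2), mul_one_div, div_self ht.ne', Real.rpow_one]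
/-- upper bound `𝔐[H] ≤ Ψ(ς)` on the quantity
`𝔐[H] = max{‖Bz‖_r : z ∈ 2X_s, ‖HᵀAz‖_∞ ≤ 2}` in terms of the quantities `ς_ℓ`
bounding `max{B_ℓᵀx : x ∈ X_s, ‖H_ℓᵀAx‖_∞ ≤ 1}`, where `H = [H₁,…,H_ν]` is a
block contrast matrix and `B X_s ⊆ {y : ‖Diag(γ)y‖_ρ ≤ 1}`. -/
theorem stmt1
    {n m ν : ℕ}
    (X : Set (Fin n → ℝ)) (hXne : X.Nonempty) (hXconv : Convex ℝ X) (hXcomp : IsCompact X)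
    (A : Matrix (Fin m) (Fin n) ℝ) (B : Matrix (Fin ν) (Fin n) ℝ)
    (r ρ : ℝ≥0∞) (hr : 1 ≤ r) (hρ : 1 ≤ ρ)
    (γ : Fin ν → ℝ) (hγ : ∀ ℓ, 0 < γ ℓ)
    -- `B X_s ⊆ {y : ‖Diag(γ) y‖_ρ ≤ 1}`, where `X_s = (1/2)(X − X)`
    (hBXs : ∀ x ∈ X, ∀ y ∈ X,
      lpNorm ρ (fun ℓ => γ ℓ * B.mulVec ((2⁻¹ : ℝ) • (x - y)) ℓ) ≤ 1)
    -- block sizes and the block contrast matrix `H = [H₁,…,H_ν]`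
    (mℓ : Fin ν → ℕ) (hmℓ : ∀ ℓ, 1 ≤ mℓ ℓ)
    (H : Matrix (Fin m) ((ℓ : Fin ν) × Fin (mℓ ℓ)) ℝ)
    (ς : Fin ν → ℝ) (hςpos : ∀ ℓ, 0 < ς ℓ)
    -- `max{B_ℓᵀ x : x ∈ X_s, ‖H_ℓᵀ A x‖_∞ ≤ 1} ≤ ς_ℓ`
    (hς : ∀ ℓ : Fin ν, ∀ x ∈ X, ∀ y ∈ X,
      (∀ j : Fin (mℓ ℓ), |Hᵀ ⟨ℓ, j⟩ ⬝ᵥ A.mulVec ((2⁻¹ : ℝ) • (x - y))| ≤ 1) →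
      B ℓ ⬝ᵥ ((2⁻¹ : ℝ) • (x - y)) ≤ ς ℓ) :
    sSup {c | ∃ x ∈ X, ∃ y ∈ X,
        (∀ p : (ℓ : Fin ν) × Fin (mℓ ℓ), |Hᵀ p ⬝ᵥ A.mulVec (x - y)| ≤ 2) ∧
        c = lpNorm r (B.mulVec (x - y))}
      ≤ 2 * sSup {c | ∃ v : Fin ν → ℝ, lpNorm ρ v ≤ 1 ∧
          (∀ ℓ, 0 ≤ v ℓ ∧ v ℓ ≤ γ ℓ * ς ℓ) ∧
          c = lpNorm r (fun ℓ => v ℓ / γ ℓ)} := by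
  set S₂ := {c | ∃ v : Fin ν → ℝ, lpNorm ρ v ≤ 1 ∧
      (∀ ℓ, 0 ≤ v ℓ ∧ v ℓ ≤ γ ℓ * ς ℓ) ∧
      c = lpNorm r (fun ℓ => v ℓ / γ ℓ)} with hS₂def
  have hbdd : BddAbove S₂ := by
    refine ⟨lpNorm r (fun ℓ => ς ℓ), ?_⟩
    rintro c ⟨v, hv1, hv2, rfl⟩
    refine lpNorm_mono r fun ℓ => ?_
    rw [abs_of_nonneg (div_nonneg (hv2 ℓ).1 (hγ ℓ).le), abs_of_nonneg (hςpos ℓ).le,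
      div_le_iff₀ (hγ ℓ)]
    linarith [(hv2 ℓ).2]
  have h0mem : (0:ℝ) ∈ S₂ := by
    refine ⟨fun _ => 0, by rw [lpNorm_zero hρ]; norm_num,
      fun ℓ => ⟨le_refl 0, mul_nonneg (hγ ℓ).le (hςpos ℓ).le⟩, ?_⟩
    simp_rw [zero_div]
    rw [lpNorm_zero hr]
  have hSnonneg : 0 ≤ sSup S₂ := le_csSup hbdd h0mem
  refine Real.sSup_le ?_ (by linarith)
  rintro c ⟨x, hx, y, hy, hcon, rfl⟩
  set z := (2⁻¹:ℝ) • (x - y) with hzdef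
  -- constraint in halved form
  have hcon' : ∀ p : (ℓ : Fin ν) × Fin (mℓ ℓ), |Hᵀ p ⬝ᵥ A.mulVec z| ≤ 1 := by
    intro p
    have : A.mulVec z = (2⁻¹:ℝ) • A.mulVec (x - y) := by
      rw [hzdef, Matrix.mulVec_smul]
    rw [this, dotProduct_smul, smul_eq_mul, abs_mul]
    have := hcon p
    rw [abs_of_pos (by norm_num : (0:ℝ) < 2⁻¹)]
    linarith
  have hconneg : ∀ p : (ℓ : Fin ν) × Fin (mℓ ℓ),
      |Hᵀ p ⬝ᵥ A.mulVec ((2⁻¹:ℝ) • (y - x))| ≤ 1 := by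
    intro p
    have hneg : (2⁻¹:ℝ) • (y - x) = -z := by rw [hzdef]; module
    rw [hneg, Matrix.mulVec_neg, dotProduct_neg, abs_neg]
    exact hcon' p
  have habs : ∀ ℓ, |B.mulVec z ℓ| ≤ ς ℓ := by
    intro ℓ
    rw [abs_le]
    constructor
    · have h1 := hς ℓ y hy x hx (fun j => hconneg ⟨ℓ, j⟩)
      have h2 : B ℓ ⬝ᵥ ((2⁻¹:ℝ) • (y - x)) = -(B.mulVec z ℓ) := by
        have : (2⁻¹:ℝ) • (y - x) = -z := by rw [hzdef]; module
        rw [this]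
        simp [Matrix.mulVec]
      linarith [h1, h2 ▸ h1]
    · exact hς ℓ x hx y hy (fun j => hcon' ⟨ℓ, j⟩)
  set v := fun ℓ => γ ℓ * |B.mulVec z ℓ| with hvdef
  have hvdiv : ∀ ℓ, v ℓ / γ ℓ = |B.mulVec z ℓ| := fun ℓ =>
    mul_div_cancel_left₀ _ (hγ ℓ).ne'
  have hmem : lpNorm r (fun ℓ => v ℓ / γ ℓ) ∈ S₂ := by
    refine ⟨v, ?_, fun ℓ => ⟨mul_nonneg (hγ ℓ).le (abs_nonneg _), ?_⟩, rfl⟩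
    · refine le_trans (lpNorm_mono ρ fun ℓ => ?_) (hBXs x hx y hy)
      rw [hvdef]
      simp only
      rw [abs_mul, abs_mul, abs_abs, abs_of_pos (hγ ℓ)]
    · exact mul_le_mul_of_nonneg_left (habs ℓ) (hγ ℓ).le
  have hkey : lpNorm r (B.mulVec (x - y)) = 2 * lpNorm r (fun ℓ => v ℓ / γ ℓ) := by
    have h1 : B.mulVec (x - y) = fun ℓ => 2 * B.mulVec z ℓ := by
      funext ℓ
      have : B.mulVec z = (2⁻¹:ℝ) • B.mulVec (x - y) := by
        rw [hzdef, Matrix.mulVec_smul]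
      rw [this]
      simp
    rw [h1, lpNorm_two_smul hr]
    congr 1
    rw [← lpNorm_abs r (B.mulVec z)]
    congr 1
    funext ℓ
    rw [hvdiv ℓ]
  rw [hkey]
  exact mul_le_mul_of_nonneg_left (le_csSup hbdd hmem) (by norm_num)
end

section
/- Let X_s ⊂ ℝⁿ be a nonempty convex compact set symmetric with respect to the origin, b ∈ ℝⁿ, A an m×n matrix, and s(·) a norm on ℝᵐ. Let Opt = inf_{g∈ℝᵐ} [ s(g) + max_{x∈X_s} (b − Aᵀg)ᵀx ]. Suppose ḡ is a minimizer of this infimum with ḡ ≠ 0, and set h̄ = ḡ/s(ḡ). Then max{ |bᵀx| : x ∈ X_s, |h̄ᵀAx| ≤ 1 } ≤ Opt. -/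
open Matrix

/-- if `ḡ` is a minimizer of
`g ↦ s(g) + max_{x ∈ X_s} (b − Aᵀg)ᵀx` with optimal value `Opt`, and
`h̄ = ḡ/s(ḡ)`, then `max{|bᵀx| : x ∈ X_s, |h̄ᵀAx| ≤ 1} ≤ Opt`. -/
theorem stmt2
    {n m : ℕ}
    (Xs : Set (Fin n → ℝ)) (hne : Xs.Nonempty) (hconv : Convex ℝ Xs)
    (hcomp : IsCompact Xs) (hsymm : ∀ x ∈ Xs, -x ∈ Xs)
    (b : Fin n → ℝ) (A : Matrix (Fin m) (Fin n) ℝ)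
    (s : (Fin m → ℝ) → ℝ)
    (s_add : ∀ g g', s (g + g') ≤ s g + s g')
    (s_smul : ∀ (c : ℝ) g, s (c • g) = |c| * s g)
    (s_eq_zero : ∀ g, s g = 0 ↔ g = 0)
    (F : (Fin m → ℝ) → ℝ)
    (hF : ∀ g, F g = s g + sSup ((fun x => (b - Aᵀ.mulVec g) ⬝ᵥ x) '' Xs))
    (gbar : Fin m → ℝ) (hgbar : ∀ g, F gbar ≤ F g) (hgbar0 : gbar ≠ 0)
    (Opt : ℝ) (hOpt : Opt = F gbar)
    (hbar : Fin m → ℝ) (hhbar : hbar = (s gbar)⁻¹ • gbar) :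
    ∀ x ∈ Xs, |hbar ⬝ᵥ A.mulVec x| ≤ 1 → |b ⬝ᵥ x| ≤ Opt := by
  intro x hx hx1
  set σ := s gbar with hσ
  -- nonnegativity of s, hence σ > 0
  have hs0 : s 0 = 0 := (s_eq_zero 0).mpr rfl
  have hsnonneg : ∀ g, 0 ≤ s g := by
    intro g
    have h1 := s_add g (-g)
    have h2 : s (-g) = s g := by
      have := s_smul (-1) g
      simpa using this
    have h3 : g + -g = 0 := by abel
    rw [h3, hs0, h2] at h1
    linarith
  have hσpos : 0 < σ := by
    rcases lt_or_eq_of_le (hsnonneg gbar) with h | h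
    · exact h
    · exact absurd ((s_eq_zero gbar).mp h.symm) hgbar0
  have hgb : gbar = σ • hbar := by
    rw [hhbar, smul_smul, mul_inv_cancel₀ (ne_of_gt hσpos), one_smul]
  -- boundedness above of the image
  have hcont : Continuous (fun x : Fin n → ℝ => (b - Aᵀ.mulVec gbar) ⬝ᵥ x) := by
    unfold dotProduct
    exact continuous_finset_sum _ fun i _ => continuous_const.mul (continuous_apply i)
  have hbdd : BddAbove ((fun x => (b - Aᵀ.mulVec gbar) ⬝ᵥ x) '' Xs) :=
    (hcomp.image hcont).bddAbove
  -- key bound: for y ∈ Xs, (b - Aᵀḡ)ᵀy ≤ Opt - σ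
  have hkey : ∀ y ∈ Xs, (b - Aᵀ.mulVec gbar) ⬝ᵥ y ≤ Opt - σ := by
    intro y hy
    have hle : (b - Aᵀ.mulVec gbar) ⬝ᵥ y ≤
        sSup ((fun x => (b - Aᵀ.mulVec gbar) ⬝ᵥ x) '' Xs) :=
      le_csSup hbdd ⟨y, hy, rfl⟩
    have : Opt = σ + sSup ((fun x => (b - Aᵀ.mulVec gbar) ⬝ᵥ x) '' Xs) := by
      rw [hOpt, hF]
    linarith
  -- decomposition of bᵀy
  have hdecomp : ∀ y : Fin n → ℝ,
      b ⬝ᵥ y = (b - Aᵀ.mulVec gbar) ⬝ᵥ y + σ * (hbar ⬝ᵥ A.mulVec y) := by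
    intro y
    have h1 : (Aᵀ.mulVec gbar) ⬝ᵥ y = gbar ⬝ᵥ A.mulVec y := by
      rw [Matrix.mulVec_transpose, ← Matrix.dotProduct_mulVec]
    have h2 : gbar ⬝ᵥ A.mulVec y = σ * (hbar ⬝ᵥ A.mulVec y) := by
      rw [hgb, smul_dotProduct, smul_eq_mul]
    rw [sub_dotProduct, h1, h2]; ring
  -- bound for x
  have hub : b ⬝ᵥ x ≤ Opt := by
    have h1 := hkey x hx
    have h2 : hbar ⬝ᵥ A.mulVec x ≤ 1 := (abs_le.mp hx1).2
    have := hdecomp x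
    nlinarith
  -- bound for -x
  have hlb : b ⬝ᵥ (-x) ≤ Opt := by
    have h1 := hkey (-x) (hsymm x hx)
    have h2 : hbar ⬝ᵥ A.mulVec (-x) ≤ 1 := by
      have : hbar ⬝ᵥ A.mulVec (-x) = -(hbar ⬝ᵥ A.mulVec x) := by
        rw [Matrix.mulVec_neg, dotProduct_neg]
      rw [this]
      linarith [(abs_le.mp hx1).1]
    have := hdecomp (-x)
    nlinarith
  have hlb' : -(b ⬝ᵥ x) ≤ Opt := by
    rwa [dotProduct_neg] at hlb
  exact abs_le.mpr ⟨by linarith, hub⟩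
end

section
/- Let n be a positive integer, 1 ≤ ρ ≤ r < ∞, ϑ > 0, and let a_ℓ, b_ℓ, d_ℓ > 0 for 1 ≤ ℓ ≤ n be such that the sequences a_ℓ/d_ℓ and b_ℓ/a_ℓ are nonincreasing in ℓ. Set γ_ℓ = d_ℓ/b_ℓ and ς_ℓ = b_ℓ·min(ϑ/a_ℓ, 1/d_ℓ). Define 𝔫 = n if Σ_{ℓ=1}^{n} (ϑ d_ℓ/a_ℓ)^ρ ≤ 1, and otherwise let 𝔫 be the smallest positive integer with Σ_{ℓ=1}^{𝔫} (ϑ d_ℓ/a_ℓ)^ρ > 1. Then Ψ := 2·max{ ‖[v₁/γ₁;…;v_n/γ_n]‖_r : ‖v‖_ρ ≤ 1, 0 ≤ v_ℓ ≤ γ_ℓ ς_ℓ for all ℓ } ≤ 2 ( Σ_{ℓ=1}^{𝔫} (ϑ b_ℓ/a_ℓ)^r )^{1/r}. -/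
open Finset

private lemma aux_rpow_bound {x M ρ r : ℝ} (hx : 0 ≤ x) (hxM : x ≤ M)
    (hρ : 0 < ρ) (hρr : ρ ≤ r) : x ^ r ≤ M ^ (r - ρ) * x ^ ρ := by
  have hr0 : 0 < r := lt_of_lt_of_le hρ hρr
  rcases eq_or_lt_of_le hx with h0 | h0
  · rw [← h0, Real.zero_rpow hr0.ne', Real.zero_rpow hρ.ne', mul_zero]
  · have hxr : x ^ r = x ^ (r - ρ) * x ^ ρ := by
      rw [← Real.rpow_add h0]; ring_nf
    rw [hxr]
    have h1 : x ^ (r - ρ) ≤ M ^ (r - ρ) :=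
      Real.rpow_le_rpow hx hxM (by linarith)
    exact mul_le_mul_of_nonneg_right h1 (Real.rpow_nonneg hx _)

/-- Proposition on the diagonal "simple case": with
`γ_ℓ = d_ℓ/b_ℓ`, `ς_ℓ = b_ℓ min(ϑ/a_ℓ, 1/d_ℓ)`, and `𝔫` defined from the partial
sums of `(ϑ d_ℓ/a_ℓ)^ρ`, one has
`Ψ = 2 max{‖(v_ℓ/γ_ℓ)_ℓ‖_r : ‖v‖_ρ ≤ 1, 0 ≤ v_ℓ ≤ γ_ℓ ς_ℓ} ≤ 2 (Σ_{ℓ≤𝔫} (ϑ b_ℓ/a_ℓ)^r)^{1/r}`. -/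
theorem stmt4
    {n : ℕ} (hn : 0 < n)
    (ρ r : ℝ) (h1ρ : 1 ≤ ρ) (hρr : ρ ≤ r)
    (ϑ : ℝ) (hϑ : 0 < ϑ)
    (a b d : Fin n → ℝ)
    (ha : ∀ ℓ, 0 < a ℓ) (hb : ∀ ℓ, 0 < b ℓ) (hd : ∀ ℓ, 0 < d ℓ)
    (hmono_ad : ∀ k ℓ : Fin n, k ≤ ℓ → a ℓ / d ℓ ≤ a k / d k)
    (hmono_ba : ∀ k ℓ : Fin n, k ≤ ℓ → b ℓ / a ℓ ≤ b k / a k)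
    (γ ς : Fin n → ℝ)
    (hγ : ∀ ℓ, γ ℓ = d ℓ / b ℓ)
    (hς : ∀ ℓ, ς ℓ = b ℓ * min (ϑ / a ℓ) (1 / d ℓ))
    (𝔫 : ℕ)
    (h𝔫 : ((∑ ℓ : Fin n, (ϑ * d ℓ / a ℓ) ^ ρ ≤ 1) ∧ 𝔫 = n) ∨
      (0 < 𝔫 ∧
        1 < ∑ ℓ ∈ Finset.univ.filter (fun ℓ : Fin n => (ℓ : ℕ) < 𝔫), (ϑ * d ℓ / a ℓ) ^ ρ ∧
        ∀ k : ℕ, 0 < k →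
          1 < ∑ ℓ ∈ Finset.univ.filter (fun ℓ : Fin n => (ℓ : ℕ) < k), (ϑ * d ℓ / a ℓ) ^ ρ →
          𝔫 ≤ k)) :
    2 * sSup {c | ∃ v : Fin n → ℝ,
        (∑ ℓ, |v ℓ| ^ ρ) ^ (1 / ρ) ≤ 1 ∧
        (∀ ℓ, 0 ≤ v ℓ ∧ v ℓ ≤ γ ℓ * ς ℓ) ∧
        c = (∑ ℓ, |v ℓ / γ ℓ| ^ r) ^ (1 / r)}
      ≤ 2 * (∑ ℓ ∈ Finset.univ.filter (fun ℓ : Fin n => (ℓ : ℕ) < 𝔫),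
          (ϑ * b ℓ / a ℓ) ^ r) ^ (1 / r) := by
  have hρ0 : 0 < ρ := by linarith
  have hr0 : 0 < r := by linarith
  set w : Fin n → ℝ := fun ℓ => (ϑ * d ℓ / a ℓ) ^ ρ with hw_def
  set cc : Fin n → ℝ := fun ℓ => (ϑ * b ℓ / a ℓ) ^ r / w ℓ with hcc_def
  have hM_pos : ∀ ℓ, 0 < ϑ * b ℓ / a ℓ := fun ℓ => div_pos (mul_pos hϑ (hb ℓ)) (ha ℓ)
  have hW0_pos : ∀ ℓ, 0 < ϑ * d ℓ / a ℓ := fun ℓ => div_pos (mul_pos hϑ (hd ℓ)) (ha ℓ)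
  have hw_pos : ∀ ℓ, 0 < w ℓ := fun ℓ =>
    Real.rpow_pos_of_pos (hW0_pos ℓ) _
  have hcc_nonneg : ∀ ℓ, 0 ≤ cc ℓ := fun ℓ =>
    div_nonneg (Real.rpow_nonneg (hM_pos ℓ).le _) (hw_pos ℓ).le
  have hcc_mono : ∀ k ℓ : Fin n, k ≤ ℓ → cc ℓ ≤ cc k := by
    intro k ℓ hkl
    have hnum : (ϑ * b ℓ / a ℓ) ^ r ≤ (ϑ * b k / a k) ^ r := by
      apply Real.rpow_le_rpow (hM_pos ℓ).le _ hr0.le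
      have := hmono_ba k ℓ hkl
      rw [div_le_div_iff₀ (ha ℓ) (ha k)] at this ⊢
      nlinarith [hϑ.le]
    have hden : w k ≤ w ℓ := by
      apply Real.rpow_le_rpow (hW0_pos k).le _ hρ0.le
      have := hmono_ad k ℓ hkl
      rw [div_le_div_iff₀ (hd ℓ) (hd k)] at this
      rw [div_le_div_iff₀ (ha k) (ha ℓ)]
      nlinarith [hϑ.le]
    exact div_le_div₀ (Real.rpow_nonneg (hM_pos k).le _) hnum (hw_pos k) hden
  have hcw : ∀ ℓ, cc ℓ * w ℓ = (ϑ * b ℓ / a ℓ) ^ r := fun ℓ =>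
    div_mul_cancel₀ _ (hw_pos ℓ).ne'
  -- the key bound for the sums
  have hkey : ∀ v : Fin n → ℝ,
      (∑ ℓ, |v ℓ| ^ ρ) ^ (1 / ρ) ≤ 1 →
      (∀ ℓ, 0 ≤ v ℓ ∧ v ℓ ≤ γ ℓ * ς ℓ) →
      (∑ ℓ, |v ℓ / γ ℓ| ^ r) ≤
        ∑ ℓ ∈ Finset.univ.filter (fun ℓ : Fin n => (ℓ : ℕ) < 𝔫), (ϑ * b ℓ / a ℓ) ^ r := by
    intro v hcon hv
    set u : Fin n → ℝ := fun ℓ => (v ℓ) ^ ρ with hu_def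
    have hu_nonneg : ∀ ℓ, 0 ≤ u ℓ := fun ℓ => Real.rpow_nonneg (hv ℓ).1 _
    have hγς : ∀ ℓ, γ ℓ * ς ℓ ≤ ϑ * d ℓ / a ℓ := by
      intro ℓ
      have h1 : γ ℓ * ς ℓ = d ℓ * min (ϑ / a ℓ) (1 / d ℓ) := by
        have hbne := (hb ℓ).ne'
        rw [hγ, hς]
        field_simp
      rw [h1]
      calc d ℓ * min (ϑ / a ℓ) (1 / d ℓ) ≤ d ℓ * (ϑ / a ℓ) :=
            mul_le_mul_of_nonneg_left (min_le_left _ _) (hd ℓ).le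
        _ = ϑ * d ℓ / a ℓ := by ring
    have hu_le_w : ∀ ℓ, u ℓ ≤ w ℓ := fun ℓ =>
      Real.rpow_le_rpow (hv ℓ).1 (le_trans (hv ℓ).2 (hγς ℓ)) hρ0.le
    have hsum_u : ∑ ℓ, u ℓ ≤ 1 := by
      have habs : ∀ ℓ, |v ℓ| ^ ρ = u ℓ := fun ℓ => by
        rw [abs_of_nonneg (hv ℓ).1]
      rw [Finset.sum_congr rfl (fun ℓ _ => habs ℓ)] at hcon
      set s := ∑ ℓ, u ℓ with hs_def
      have hs0 : 0 ≤ s := Finset.sum_nonneg fun ℓ _ => hu_nonneg ℓ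
      have h2 : (s ^ (1 / ρ)) ^ ρ ≤ 1 ^ ρ :=
        Real.rpow_le_rpow (Real.rpow_nonneg hs0 _) hcon hρ0.le
      rwa [← Real.rpow_mul hs0, one_div_mul_cancel hρ0.ne', Real.rpow_one,
        Real.one_rpow] at h2
    -- per-term bound
    have hterm : ∀ ℓ, |v ℓ / γ ℓ| ^ r ≤ cc ℓ * u ℓ := by
      intro ℓ
      have hγpos : 0 < γ ℓ := by rw [hγ]; exact div_pos (hd ℓ) (hb ℓ)
      have hQ : v ℓ / γ ℓ = v ℓ * (b ℓ / d ℓ) := by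
        have hbne := (hb ℓ).ne'
        have hdne := (hd ℓ).ne'
        rw [hγ]; field_simp
      have hx0 : 0 ≤ v ℓ / γ ℓ := div_nonneg (hv ℓ).1 hγpos.le
      have hxM : v ℓ / γ ℓ ≤ ϑ * b ℓ / a ℓ := by
        have h1 : v ℓ / γ ℓ ≤ ς ℓ := by
          rw [div_le_iff₀ hγpos]
          calc v ℓ ≤ γ ℓ * ς ℓ := (hv ℓ).2
            _ = ς ℓ * γ ℓ := by ring
        calc v ℓ / γ ℓ ≤ ς ℓ := h1
          _ ≤ b ℓ * (ϑ / a ℓ) := by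
              rw [hς]
              exact mul_le_mul_of_nonneg_left (min_le_left _ _) (hb ℓ).le
          _ = ϑ * b ℓ / a ℓ := by ring
      rw [abs_of_nonneg hx0]
      have h2 : (v ℓ / γ ℓ) ^ r ≤ (ϑ * b ℓ / a ℓ) ^ (r - ρ) * (v ℓ / γ ℓ) ^ ρ :=
        aux_rpow_bound hx0 hxM hρ0 hρr
      have h3 : (ϑ * b ℓ / a ℓ) ^ (r - ρ) * (v ℓ / γ ℓ) ^ ρ = cc ℓ * u ℓ := by
        have hbd0 : (0:ℝ) ≤ b ℓ / d ℓ := le_of_lt (div_pos (hb ℓ) (hd ℓ))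
        have e1 : (v ℓ / γ ℓ) ^ ρ = (v ℓ) ^ ρ * (b ℓ / d ℓ) ^ ρ := by
          rw [hQ, Real.mul_rpow (hv ℓ).1 hbd0]
        have e2 : (b ℓ / d ℓ : ℝ) ^ ρ * w ℓ = (ϑ * b ℓ / a ℓ) ^ ρ := by
          rw [hw_def]
          rw [← Real.mul_rpow hbd0 (hW0_pos ℓ).le]
          congr 1
          have hane := (ha ℓ).ne'
          have hdne := (hd ℓ).ne'
          field_simp
        have e3 : (ϑ * b ℓ / a ℓ) ^ (r - ρ) * (ϑ * b ℓ / a ℓ) ^ ρ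
            = (ϑ * b ℓ / a ℓ) ^ r := by
          rw [← Real.rpow_add (hM_pos ℓ)]
          congr 1
          ring
        show (ϑ * b ℓ / a ℓ) ^ (r - ρ) * (v ℓ / γ ℓ) ^ ρ
            = (ϑ * b ℓ / a ℓ) ^ r / w ℓ * (v ℓ) ^ ρ
        rw [e1, div_mul_eq_mul_div, eq_div_iff (hw_pos ℓ).ne']
        calc (ϑ * b ℓ / a ℓ) ^ (r - ρ) * ((v ℓ) ^ ρ * (b ℓ / d ℓ) ^ ρ) * w ℓ
            = (ϑ * b ℓ / a ℓ) ^ (r - ρ) * ((b ℓ / d ℓ) ^ ρ * w ℓ) * (v ℓ) ^ ρ := by ring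
          _ = (ϑ * b ℓ / a ℓ) ^ (r - ρ) * (ϑ * b ℓ / a ℓ) ^ ρ * (v ℓ) ^ ρ := by rw [e2]
          _ = (ϑ * b ℓ / a ℓ) ^ r * (v ℓ) ^ ρ := by rw [e3]
      linarith [h2, h3.le, h3.ge]
    have hstep1 : (∑ ℓ, |v ℓ / γ ℓ| ^ r) ≤ ∑ ℓ, cc ℓ * u ℓ :=
      Finset.sum_le_sum fun ℓ _ => hterm ℓ
    refine le_trans hstep1 ?_
    -- now the combinatorial bound : ∑ cc*u ≤ ∑_{head} cc*w = RHS
    have htarget_eq : ∑ ℓ ∈ Finset.univ.filter (fun ℓ : Fin n => (ℓ : ℕ) < 𝔫),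
        (ϑ * b ℓ / a ℓ) ^ r
        = ∑ ℓ ∈ Finset.univ.filter (fun ℓ : Fin n => (ℓ : ℕ) < 𝔫), cc ℓ * w ℓ :=
      Finset.sum_congr rfl fun ℓ _ => (hcw ℓ).symm
    rw [htarget_eq]
    rcases h𝔫 with ⟨_, h𝔫n⟩ | ⟨h𝔫pos, hgt, hmin⟩
    · -- case 𝔫 = n : filter is everything
      have hfil : Finset.univ.filter (fun ℓ : Fin n => (ℓ : ℕ) < 𝔫) = Finset.univ := by
        subst h𝔫n
        ext ℓ; simp [ℓ.isLt]
      rw [hfil]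
      exact Finset.sum_le_sum fun ℓ _ =>
        mul_le_mul_of_nonneg_left (hu_le_w ℓ) (hcc_nonneg ℓ)
    · -- case 𝔫 minimal with head sum > 1
      have h𝔫n : 𝔫 ≤ n := by
        by_contra hcon'
        push_neg at hcon'
        have e : Finset.univ.filter (fun ℓ : Fin n => (ℓ : ℕ) < 𝔫)
            = Finset.univ.filter (fun ℓ : Fin n => (ℓ : ℕ) < n) := by
          ext ℓ; simp [ℓ.isLt, lt_trans ℓ.isLt hcon']
        rw [e] at hgt
        exact absurd (hmin n hn hgt) (not_le.2 hcon')
      set m : Fin n := ⟨𝔫 - 1, by omega⟩ with hm_def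
      have hcm : 0 ≤ cc m := hcc_nonneg m
      have hH2 : ∑ ℓ ∈ Finset.univ.filter (fun ℓ : Fin n => (ℓ : ℕ) < 𝔫 - 1), w ℓ ≤ 1 := by
        by_contra hcon'
        push_neg at hcon'
        rcases Nat.eq_or_lt_of_le h𝔫pos with h1 | h1
        · have : Finset.univ.filter (fun ℓ : Fin n => (ℓ : ℕ) < 𝔫 - 1) = ∅ := by
            ext ℓ; simp; omega
          rw [this, Finset.sum_empty] at hcon'
          linarith
        · have := hmin (𝔫 - 1) (by omega) hcon'
          omega
      -- abbreviations
      set P : Fin n → Prop := fun ℓ => (ℓ : ℕ) < 𝔫 with hP_def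
      have hsplit_cu : ∑ ℓ ∈ Finset.univ.filter P, cc ℓ * u ℓ
          + ∑ ℓ ∈ Finset.univ.filter (fun ℓ => ¬ P ℓ), cc ℓ * u ℓ
          = ∑ ℓ, cc ℓ * u ℓ :=
        Finset.sum_filter_add_sum_filter_not _ _ _
      have hsplit_u : ∑ ℓ ∈ Finset.univ.filter P, u ℓ
          + ∑ ℓ ∈ Finset.univ.filter (fun ℓ => ¬ P ℓ), u ℓ
          = ∑ ℓ, u ℓ :=
        Finset.sum_filter_add_sum_filter_not _ _ _
      set A := ∑ ℓ ∈ Finset.univ.filter P, cc ℓ * u ℓ with hA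
      set T := ∑ ℓ ∈ Finset.univ.filter (fun ℓ => ¬ P ℓ), cc ℓ * u ℓ with hT
      set U := ∑ ℓ ∈ Finset.univ.filter P, u ℓ with hU
      set S := ∑ ℓ ∈ Finset.univ.filter (fun ℓ => ¬ P ℓ), u ℓ with hS
      set Ww := ∑ ℓ ∈ Finset.univ.filter P, w ℓ with hWw
      set W := ∑ ℓ ∈ Finset.univ.filter P, cc ℓ * w ℓ with hW
      have hS0 : 0 ≤ S := Finset.sum_nonneg fun ℓ _ => hu_nonneg ℓ
      have hUS : U + S ≤ 1 := by rw [hsplit_u]; exact hsum_u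
      have hT_le : T ≤ cc m * S := by
        rw [hS, Finset.mul_sum]
        apply Finset.sum_le_sum
        intro ℓ hℓ
        simp only [Finset.mem_filter, Finset.mem_univ, true_and, hP_def] at hℓ
        have hmℓ : m ≤ ℓ := by
          rw [Fin.le_def]; simp only [hm_def]; omega
        exact mul_le_mul_of_nonneg_right (hcc_mono m ℓ hmℓ) (hu_nonneg ℓ)
      have hWA : cc m * (Ww - U) ≤ W - A := by
        have e1 : W - A = ∑ ℓ ∈ Finset.univ.filter P, cc ℓ * (w ℓ - u ℓ) := by
          rw [hW, hA, ← Finset.sum_sub_distrib]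
          exact Finset.sum_congr rfl fun ℓ _ => by ring
        have e2 : cc m * (Ww - U) = ∑ ℓ ∈ Finset.univ.filter P, cc m * (w ℓ - u ℓ) := by
          rw [hWw, hU, ← Finset.sum_sub_distrib, Finset.mul_sum]
        rw [e1, e2]
        apply Finset.sum_le_sum
        intro ℓ hℓ
        simp only [Finset.mem_filter, Finset.mem_univ, true_and, hP_def] at hℓ
        have hℓm : ℓ ≤ m := by
          rw [Fin.le_def]; simp only [hm_def]; omega
        exact mul_le_mul_of_nonneg_right (hcc_mono ℓ m hℓm) (sub_nonneg.2 (hu_le_w ℓ))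
      have hgt' : 1 < Ww := hgt
      have h1 : cc m * S ≤ cc m * (1 - U) :=
        mul_le_mul_of_nonneg_left (by linarith) hcm
      have h2 : cc m * (1 - U) ≤ cc m * (Ww - U) :=
        mul_le_mul_of_nonneg_left (by linarith) hcm
      rw [← hsplit_cu]
      linarith
  -- assemble
  have hB0 : 0 ≤ (∑ ℓ ∈ Finset.univ.filter (fun ℓ : Fin n => (ℓ : ℕ) < 𝔫),
      (ϑ * b ℓ / a ℓ) ^ r) ^ (1 / r) :=
    Real.rpow_nonneg (Finset.sum_nonneg fun ℓ _ => Real.rpow_nonneg (hM_pos ℓ).le _) _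
  apply mul_le_mul_of_nonneg_left _ (by norm_num : (0:ℝ) ≤ 2)
  apply Real.sSup_le _ hB0
  rintro x ⟨v, hcon, hv, rfl⟩
  exact Real.rpow_le_rpow
    (Finset.sum_nonneg fun ℓ _ => Real.rpow_nonneg (abs_nonneg _) _)
    (hkey v hcon hv) (one_div_nonneg.2 hr0.le)
end

section
/- Let X ⊂ ℝⁿ be a nonempty convex compact set with symmetrization X_s = (1/2)(X − X), A an m×n matrix, B a ν×n matrix, ‖·‖ a norm on ℝ^ν with conjugate unit ball B_* = {u ∈ ℝ^ν : ‖u‖_* ≤ 1}. Let 𝓜 : S^{ν+n} → ℝ be a function satisfying 𝓜(M) ≥ max_{u∈B_*, z∈X_s} [u;z]ᵀ M [u;z] for every symmetric (ν+n)×(ν+n) matrix M. Let H = [h₁,…,h_N] be an m×N matrix, λ ∈ ℝ^N with λ ≥ 0, Θ_λ = H Diag(λ) Hᵀ and μ_λ = Σ_ℓ λ_ℓ. Then 𝔐[H] := max{‖Bz‖ : z ∈ 2X_s, ‖HᵀAz‖_∞ ≤ 2} ≤ 2·𝓜(B₊[Θ_λ]) + 2μ_λ, where B₊[Θ] is the symmetric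 (ν+n)×(ν+n) matrix with zero ν×ν upper-left block, upper-right block (1/2)B, lower-left block (1/2)Bᵀ, and lower-right block −AᵀΘA. -/
open Matrix

/-!
Hahn–Banach yields `u` with `‖u‖_* ≤ 1` and `uᵀ B z = ‖B z‖` for `z = x - y`. At `[u; z/2]` the
quadratic form of `B₊[Θ_λ]` equals `‖B z‖ / 2 - Σ_ℓ λ_ℓ (h_ℓᵀ A z / 2)²`, and `‖Hᵀ A z‖_∞ ≤ 2`
bounds the penalty by `μ_λ`; the hypothesis on `𝓜` then gives the claim.
-/

theorem exists_dotProduct_le_of_sublinear {ι : Type*} [Fintype ι] (p : (ι → ℝ) → ℝ)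
    (p_add : ∀ u v, p (u + v) ≤ p u + p v)
    (p_smul : ∀ c : ℝ, 0 < c → ∀ u, p (c • u) = c * p u) (v : ι → ℝ) :
    ∃ u : ι → ℝ, (∀ y, u ⬝ᵥ y ≤ p y) ∧ u ⬝ᵥ v = p v := by
  classical
  have p_zero : p 0 = 0 := by
    have := p_smul 2 two_pos 0
    rw [smul_zero] at this
    linarith
  have p_neg : -p v ≤ p (-v) := by
    have := p_add v (-v)
    rw [add_neg_cancel, p_zero] at this
    linarith
  have smul_le : ∀ c : ℝ, c * p v ≤ p (c • v) := by
    intro c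
    rcases lt_trichotomy c 0 with hc | rfl | hc
    · rw [← neg_neg c, neg_smul, ← smul_neg, p_smul _ (neg_pos.mpr hc)]
      nlinarith
    · simp [p_zero]
    · rw [p_smul c hc]
  let f : (ι → ℝ) →ₗ.[ℝ] ℝ := LinearPMap.mkSpanSingleton' v (p v) fun c hc => by
    rcases smul_eq_zero.mp hc with rfl | rfl <;> simp [p_zero]
  have hf : ∀ x : f.domain, f x ≤ p x := by
    rintro ⟨x, hx⟩
    obtain ⟨c, rfl⟩ := Submodule.mem_span_singleton.mp hx
    rw [LinearPMap.mkSpanSingleton'_apply]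
    exact smul_le c
  obtain ⟨g, hgf, hgp⟩ := exists_extension_of_le_sublinear f p p_smul p_add hf
  set u := (dotProductEquiv ℝ ι).symm g
  have hu : ∀ y, u ⬝ᵥ y = g y := fun y =>
    congrArg (fun φ : Module.Dual ℝ (ι → ℝ) => φ y) ((dotProductEquiv ℝ ι).apply_symm_apply g)
  refine ⟨u, fun y => (hu y).trans_le (hgp y), ?_⟩
  rw [hu, hgf ⟨v, Submodule.mem_span_singleton_self v⟩]
  exact LinearPMap.mkSpanSingleton'_apply_self _ _ _ _

section QuadraticForms

variable {R : Type*} [CommRing R] {ι κ m n : Type*} [Fintype ι] [Fintype κ] [Fintype m] [Fintype n]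

theorem sumElim_dotProduct_fromBlocks_mulVec (B : Matrix ι n R) (D : Matrix n n R) (c : R)
    (u : ι → R) (w : n → R) :
    Sum.elim u w ⬝ᵥ fromBlocks 0 (c • B) (c • Bᵀ) D *ᵥ Sum.elim u w =
      2 * c * (u ⬝ᵥ B *ᵥ w) + w ⬝ᵥ D *ᵥ w := by
  rw [fromBlocks_mulVec, Sum.elim_comp_inl, Sum.elim_comp_inr, sumElim_dotProduct_sumElim,
    zero_mulVec, zero_add, dotProduct_add, smul_mulVec, smul_mulVec, dotProduct_smul,
    dotProduct_smul, mulVec_transpose, dotProduct_comm w, ← dotProduct_mulVec, smul_eq_mul]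
  ring

theorem dotProduct_transpose_mul_diagonal_mulVec_eq_sum [DecidableEq κ] (A : Matrix m n R)
    (H : Matrix m κ R) (d : κ → R) (w : n → R) :
    w ⬝ᵥ (Aᵀ * (H * diagonal d * Hᵀ) * A) *ᵥ w = ∑ ℓ, d ℓ * (Hᵀ *ᵥ A *ᵥ w) ℓ ^ 2 := by
  rw [← mulVec_mulVec, ← mulVec_mulVec, ← mulVec_mulVec, ← mulVec_mulVec, dotProduct_mulVec,
    vecMul_transpose, dotProduct_mulVec, ← mulVec_transpose, dotProduct]
  exact Finset.sum_congr rfl fun ℓ _ => by rw [mulVec_diagonal]; ring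

end QuadraticForms

theorem dotProduct_transpose_mul_diagonal_mulVec_le_sum {κ m n : Type*} [Fintype κ]
    [DecidableEq κ] [Fintype m] [Fintype n] (A : Matrix m n ℝ) (H : Matrix m κ ℝ) {d : κ → ℝ}
    (hd : ∀ ℓ, 0 ≤ d ℓ) {w : n → ℝ} (hw : ‖Hᵀ *ᵥ A *ᵥ w‖ ≤ 1) :
    w ⬝ᵥ (Aᵀ * (H * diagonal d * Hᵀ) * A) *ᵥ w ≤ ∑ ℓ, d ℓ := by
  rw [dotProduct_transpose_mul_diagonal_mulVec_eq_sum]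
  refine Finset.sum_le_sum fun ℓ _ => mul_le_of_le_one_right (hd ℓ) ?_
  rw [sq_le_one_iff_abs_le_one, ← Real.norm_eq_abs]
  exact (norm_le_pi_norm _ ℓ).trans hw

theorem stmt5_general
    {n m ν N : ℕ}
    (X : Set (Fin n → ℝ))
    (A : Matrix (Fin m) (Fin n) ℝ) (B : Matrix (Fin ν) (Fin n) ℝ)
    (nrm : (Fin ν → ℝ) → ℝ)
    (nrm_add : ∀ u v, nrm (u + v) ≤ nrm u + nrm v)
    (nrm_smul : ∀ (c : ℝ) u, nrm (c • u) = |c| * nrm u)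
    -- dual norm of `nrm`
    (nrmStar : (Fin ν → ℝ) → ℝ)
    (hnrmStar : ∀ u, nrmStar u = sSup ((fun y => u ⬝ᵥ y) '' {y | nrm y ≤ 1}))
    (𝓜 : Matrix (Fin ν ⊕ Fin n) (Fin ν ⊕ Fin n) ℝ → ℝ)
    (h𝓜 : ∀ M : Matrix (Fin ν ⊕ Fin n) (Fin ν ⊕ Fin n) ℝ, M.IsSymm →
      ∀ u : Fin ν → ℝ, nrmStar u ≤ 1 → ∀ x ∈ X, ∀ y ∈ X,
        Sum.elim u ((2⁻¹ : ℝ) • (x - y)) ⬝ᵥ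
            M.mulVec (Sum.elim u ((2⁻¹ : ℝ) • (x - y))) ≤ 𝓜 M)
    (H : Matrix (Fin m) (Fin N) ℝ) (lam : Fin N → ℝ) (hlam : ∀ ℓ, 0 ≤ lam ℓ) :
    ∀ x ∈ X, ∀ y ∈ X,
      ‖Hᵀ.mulVec (A.mulVec (x - y))‖ ≤ 2 →
      nrm (B.mulVec (x - y)) ≤
        2 * 𝓜 (Matrix.fromBlocks 0 ((2⁻¹ : ℝ) • B) ((2⁻¹ : ℝ) • Bᵀ)
            (-(Aᵀ * (H * Matrix.diagonal lam * Hᵀ) * A)))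
          + 2 * ∑ ℓ, lam ℓ := by
  intro x hx y hy hxy
  obtain ⟨u, hu_le, hu_eq⟩ := exists_dotProduct_le_of_sublinear nrm nrm_add
    (fun c hc v => by rw [nrm_smul, abs_of_pos hc]) (B *ᵥ (x - y))
  have hu_star : nrmStar u ≤ 1 := by
    rw [hnrmStar]
    refine Real.sSup_le ?_ zero_le_one
    rintro _ ⟨v, hv, rfl⟩
    exact (hu_le v).trans hv
  have hM_symm : (fromBlocks 0 ((2⁻¹ : ℝ) • B) ((2⁻¹ : ℝ) • Bᵀ)
      (-(Aᵀ * (H * diagonal lam * Hᵀ) * A))).IsSymm :=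
    isSymm_zero.fromBlocks (transpose_smul _ _) <| IsSymm.neg <| by
      simp only [IsSymm, transpose_mul, transpose_transpose, diagonal_transpose, Matrix.mul_assoc]
  have hquad := h𝓜 _ hM_symm u hu_star x hx y hy
  rw [sumElim_dotProduct_fromBlocks_mulVec, mulVec_smul, dotProduct_smul, hu_eq, neg_mulVec,
    dotProduct_neg, smul_eq_mul] at hquad
  have hw : ‖Hᵀ *ᵥ A *ᵥ ((2⁻¹ : ℝ) • (x - y))‖ ≤ 1 := by
    rw [mulVec_smul, mulVec_smul, norm_smul, Real.norm_of_nonneg (by norm_num)]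
    linarith
  have hsum := dotProduct_transpose_mul_diagonal_mulVec_le_sum A H hlam hw
  linarith

/-- aggregation bound. If `𝓜` upper-bounds quadratic forms over
`B_* × X_s` (with `B_*` the unit ball of the conjugate norm), then for any contrast
matrix `H` and `λ ≥ 0`, with `Θ_λ = H Diag(λ) Hᵀ`, `μ_λ = Σ λ_ℓ`,
`𝔐[H] = max{‖Bz‖ : z ∈ 2X_s, ‖HᵀAz‖_∞ ≤ 2} ≤ 2𝓜(B₊[Θ_λ]) + 2μ_λ`. -/
theorem stmt5
    {n m ν N : ℕ}
    (X : Set (Fin n → ℝ)) (hXne : X.Nonempty) (hXconv : Convex ℝ X) (hXcomp : IsCompact X)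
    (A : Matrix (Fin m) (Fin n) ℝ) (B : Matrix (Fin ν) (Fin n) ℝ)
    (nrm : (Fin ν → ℝ) → ℝ)
    (nrm_add : ∀ u v, nrm (u + v) ≤ nrm u + nrm v)
    (nrm_smul : ∀ (c : ℝ) u, nrm (c • u) = |c| * nrm u)
    (nrm_eq_zero : ∀ u, nrm u = 0 ↔ u = 0)
    -- dual norm of `nrm`
    (nrmStar : (Fin ν → ℝ) → ℝ)
    (hnrmStar : ∀ u, nrmStar u = sSup ((fun y => u ⬝ᵥ y) '' {y | nrm y ≤ 1}))
    (𝓜 : Matrix (Fin ν ⊕ Fin n) (Fin ν ⊕ Fin n) ℝ → ℝ)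
    (h𝓜 : ∀ M : Matrix (Fin ν ⊕ Fin n) (Fin ν ⊕ Fin n) ℝ, M.IsSymm →
      ∀ u : Fin ν → ℝ, nrmStar u ≤ 1 → ∀ x ∈ X, ∀ y ∈ X,
        Sum.elim u ((2⁻¹ : ℝ) • (x - y)) ⬝ᵥ
            M.mulVec (Sum.elim u ((2⁻¹ : ℝ) • (x - y))) ≤ 𝓜 M)
    (H : Matrix (Fin m) (Fin N) ℝ) (lam : Fin N → ℝ) (hlam : ∀ ℓ, 0 ≤ lam ℓ) :
    ∀ x ∈ X, ∀ y ∈ X,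
      ‖Hᵀ.mulVec (A.mulVec (x - y))‖ ≤ 2 →
      nrm (B.mulVec (x - y)) ≤
        2 * 𝓜 (Matrix.fromBlocks 0 ((2⁻¹ : ℝ) • B) ((2⁻¹ : ℝ) • Bᵀ)
            (-(Aᵀ * (H * Matrix.diagonal lam * Hᵀ) * A)))
          + 2 * ∑ ℓ, lam ℓ :=
  stmt5_general X A B nrm nrm_add nrm_smul nrmStar hnrmStar 𝓜 h𝓜 H lam hlam
end

section
/- Let Q be an m×m real matrix with row sums of squares d_i = Σ_j Q_{ij}², let V be an m×m orthogonal matrix all of whose entries satisfy |V_{kj}| ≤ sqrt(2/m), and let χ = (χ₁,…,χ_m) be a vector of independent Rademacher random variables (each taking values ±1 with probability 1/2). Set G_χ = Q Diag(χ) V, so (G_χ)_{ij} = Σ_k Q_{ik} χ_k V_{kj}. Then for every i, j and every γ > 0: Prob( (G_χ)_{ij}² > 3γ d_i / m ) ≤ √3 · exp(−γ/2). -/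
/-!
A summand `Q_{ik} χ_k V_{kj}` is a symmetric two-point variable, sub-Gaussian with variance
proxy `(Q_{ik} V_{kj})²` because `cosh x ≤ exp (x² / 2)`. By independence the entry `(G_χ)_{ij}`
is sub-Gaussian with proxy `∑_k Q_{ik}² V_{kj}² ≤ 2 d_i / m`, so the two-sided Chernoff bound
gives `Prob((G_χ)_{ij}² > 3γ d_i / m) ≤ 2 exp(-3γ/4)`. Together with the trivial bound `1`,
this is at most `√3 exp(-γ/2)`.
-/

open MeasureTheory Matrix ProbabilityTheory Real
open scoped NNReal

namespace ProbabilityTheory.HasSubgaussianMGF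

variable {Ω : Type*} [MeasurableSpace Ω] {X : Ω → ℝ} {μ : Measure Ω} {c : ℝ≥0}

lemma mono {c' : ℝ≥0} (h : HasSubgaussianMGF X c μ) (hc : c ≤ c') :
    HasSubgaussianMGF X c' μ where
  integrable_exp_mul := h.integrable_exp_mul
  mgf_le t := (h.mgf_le t).trans (exp_le_exp.2 (by gcongr))

lemma measureReal_lt_sq_le (h : HasSubgaussianMGF X c μ) {t : ℝ} (ht : 0 ≤ t) :
    μ.real {ω | t < X ω ^ 2} ≤ 2 * exp (-t / (2 * c)) := by
  have : IsFiniteMeasure μ := by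
    have h1 : Integrable (fun _ ↦ (1 : ℝ)) μ := by simpa using h.integrable_exp_mul 0
    simpa using integrable_const_iff.1 h1
  have hsub : {ω | t < X ω ^ 2} ⊆ {ω | √t ≤ X ω} ∪ {ω | √t ≤ (-X) ω} := by
    intro ω hω
    have habs : √t ≤ |X ω| := by
      simpa only [sqrt_sq_eq_abs] using (sqrt_lt_sqrt ht hω).le
    rcases le_abs'.1 habs with hneg | hpos
    · exact Or.inr (show √t ≤ -X ω by linarith)
    · exact Or.inl hpos
  calc μ.real {ω | t < X ω ^ 2}
      ≤ μ.real {ω | √t ≤ X ω} + μ.real {ω | √t ≤ (-X) ω} :=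
        (measureReal_mono hsub).trans (measureReal_union_le _ _)
    _ ≤ exp (-√t ^ 2 / (2 * c)) + exp (-√t ^ 2 / (2 * c)) :=
        add_le_add (h.measure_ge_le (sqrt_nonneg t)) (h.neg.measure_ge_le (sqrt_nonneg t))
    _ = 2 * exp (-t / (2 * c)) := by rw [sq_sqrt ht]; ring

lemma measureReal_mul_lt_sq_le (h : HasSubgaussianMGF X c μ) {κ : ℝ} (hκ : 0 ≤ κ) :
    μ.real {ω | κ * c < X ω ^ 2} ≤ 2 * exp (-κ / 2) := by
  -- at `c = 0` the previous bound is void (`-t / 0 = 0`), but then `X = 0` almost everywhere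
  obtain rfl | hc := eq_zero_or_pos c
  · have hnull : μ {ω | κ * (0 : ℝ≥0) < X ω ^ 2} = 0 := by
      refine measure_mono_null (fun ω hω ↦ ?_) (ae_iff.1 h.ae_eq_zero_of_hasSubgaussianMGF_zero)
      intro h0
      simp_all
    rw [measureReal_def, hnull, ENNReal.toReal_zero]
    positivity
  · convert h.measureReal_lt_sq_le (mul_nonneg hκ c.coe_nonneg) using 3
    field_simp

end ProbabilityTheory.HasSubgaussianMGF

lemma hasSubgaussianMGF_mul_sign (a : ℝ) :
    HasSubgaussianMGF (fun b : Bool ↦ a * if b then (1 : ℝ) else -1) (‖a‖₊ ^ 2)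
      (PMF.uniformOfFintype Bool).toMeasure where
  integrable_exp_mul _ := .of_finite
  mgf_le t := calc
    _ = cosh (t * a) := by simp [mgf, PMF.integral_eq_sum, cosh_eq, add_div, inv_mul_eq_div]
    _ ≤ exp ((t * a) ^ 2 / 2) := cosh_le_exp_half_sq _
    _ = exp (‖a‖₊ ^ 2 * t ^ 2 / 2) := by
      rw [coe_nnnorm, norm_eq_abs, sq_abs, mul_pow, mul_comm (t ^ 2)]

lemma hasSubgaussianMGF_sum_mul_sign {ι : Type*} [Fintype ι] (a : ι → ℝ) {c : ℝ≥0}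
    (hc : ∑ k, a k ^ 2 ≤ c) :
    HasSubgaussianMGF (fun χ : ι → Bool ↦ ∑ k, a k * if χ k then (1 : ℝ) else -1) c
      (Measure.pi fun _ ↦ (PMF.uniformOfFintype Bool).toMeasure) := by
  let X (k : ι) (b : Bool) : ℝ := a k * if b then 1 else -1
  have hX (k : ι) : HasSubgaussianMGF (fun χ : ι → Bool ↦ X k (χ k)) (‖a k‖₊ ^ 2)
      (Measure.pi fun _ ↦ (PMF.uniformOfFintype Bool).toMeasure) := by
    refine HasSubgaussianMGF.of_map (X := X k) (measurable_pi_apply k).aemeasurable ?_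
    rw [(measurePreserving_eval _ k).map_eq]
    exact hasSubgaussianMGF_mul_sign (a k)
  refine (HasSubgaussianMGF.sum_of_iIndepFun
    (iIndepFun_pi (X := X) fun k ↦ (measurable_of_countable _).aemeasurable)
    fun k _ ↦ hX k).mono ?_
  rw [← NNReal.coe_le_coe]
  simpa using hc

lemma sum_mul_sq_le_of_sq_le {ι : Type*} [Fintype ι] (q v : ι → ℝ) {b : ℝ}
    (hv : ∀ k, v k ^ 2 ≤ b) : ∑ k, (q k * v k) ^ 2 ≤ b * ∑ k, q k ^ 2 := by
  rw [Finset.mul_sum]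
  exact Finset.sum_le_sum fun k _ ↦ by
    rw [mul_pow, mul_comm b]
    exact mul_le_mul_of_nonneg_left (hv k) (sq_nonneg _)

lemma min_one_two_mul_exp_le (γ : ℝ) :
    min 1 (2 * exp (-(3 * γ / 4))) ≤ √3 * exp (-γ / 2) := by
  have hsqrt3 : √3 = exp (log 3 / 2) := by
    rw [← log_sqrt (by norm_num), exp_log (by positivity)]
  rw [hsqrt3, ← exp_add]
  -- the bound `1` covers `γ ≤ log 3`, the exponential one covers `γ ≥ log (16 / 9)`
  rcases le_or_gt γ (log 3) with hγ | hγ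
  · exact (min_le_left _ _).trans (one_le_exp (by linarith))
  · have h16_27 : 4 * log 2 ≤ 3 * log 3 := by
      have := log_le_log (by norm_num) (show (2 : ℝ) ^ 4 ≤ 3 ^ 3 by norm_num)
      rwa [log_pow, log_pow, Nat.cast_ofNat, Nat.cast_ofNat] at this
    refine (min_le_right _ _).trans ?_
    calc 2 * exp (-(3 * γ / 4)) = exp (log 2 + -(3 * γ / 4)) := by
          rw [exp_add, exp_log two_pos]
      _ ≤ exp (log 3 / 2 + -γ / 2) := exp_le_exp.2 (by linarith)

theorem stmt7_general
    {m : ℕ}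
    (Q V : Matrix (Fin m) (Fin m) ℝ)
    (d : Fin m → ℝ) (hd : ∀ i, d i = ∑ j, (Q i j) ^ 2)
    (hV_ent : ∀ k j, |V k j| ≤ Real.sqrt (2 / m))
    (P : Measure (Fin m → Bool))
    (hP : P = Measure.pi fun _ => (PMF.uniformOfFintype Bool).toMeasure) :
    ∀ i j : Fin m, ∀ γ : ℝ, 0 < γ →
      P {χ | 3 * γ * d i / m <
          (∑ k, Q i k * (if χ k then (1 : ℝ) else -1) * V k j) ^ 2}
        ≤ ENNReal.ofReal (Real.sqrt 3 * Real.exp (-γ / 2)) := by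
  intro i j γ hγ
  subst hP
  have hdi : 0 ≤ d i := hd i ▸ Finset.sum_nonneg fun k _ ↦ sq_nonneg _
  let c : ℝ≥0 := ⟨2 / m * d i, by positivity⟩
  have hX : HasSubgaussianMGF
      (fun χ : Fin m → Bool ↦ ∑ k, Q i k * (if χ k then (1 : ℝ) else -1) * V k j) c
      (Measure.pi fun _ ↦ (PMF.uniformOfFintype Bool).toMeasure) := by
    convert hasSubgaussianMGF_sum_mul_sign (fun k ↦ Q i k * V k j) ?_ using 3 with χ k
    · ring
    · change _ ≤ 2 / m * d i
      rw [hd i]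
      refine sum_mul_sq_le_of_sq_le _ _ fun k ↦ ?_
      rw [← sq_abs]
      exact (Real.le_sqrt (abs_nonneg _) (by positivity)).1 (hV_ent k j)
  have hthreshold : 3 * γ * d i / m = 3 * γ / 2 * c := by
    change _ = _ * (2 / m * d i)
    ring
  rw [hthreshold, ← ofReal_measureReal]
  refine ENNReal.ofReal_le_ofReal ?_
  calc _ ≤ min 1 (2 * exp (-(3 * γ / 2) / 2)) :=
        le_min measureReal_le_one (hX.measureReal_mul_lt_sq_le (by positivity))
    _ ≤ √3 * exp (-γ / 2) := by
        convert min_one_two_mul_exp_le γ using 4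
        ring

/-- sub-Gaussian-type tail bound for the entries of
`G_χ = Q Diag(χ) V`, where `χ` is a Rademacher vector (modelled by independent
uniform `Bool`s mapped to `±1`), `V` is orthogonal with entries of magnitude at
most `√(2/m)`, and `d_i = Σ_j Q_{ij}²`:
`Prob((G_χ)_{ij}² > 3γ d_i/m) ≤ √3 exp(−γ/2)`. -/
theorem stmt7
    {m : ℕ} (hm : 0 < m)
    (Q V : Matrix (Fin m) (Fin m) ℝ)
    (d : Fin m → ℝ) (hd : ∀ i, d i = ∑ j, (Q i j) ^ 2)
    (hV_orth : Vᵀ * V = 1)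
    (hV_ent : ∀ k j, |V k j| ≤ Real.sqrt (2 / m))
    (P : Measure (Fin m → Bool))
    (hP : P = Measure.pi fun _ => (PMF.uniformOfFintype Bool).toMeasure) :
    ∀ i j : Fin m, ∀ γ : ℝ, 0 < γ →
      P {χ | 3 * γ * d i / m <
          (∑ k, Q i k * (if χ k then (1 : ℝ) else -1) * V k j) ^ 2}
        ≤ ENNReal.ofReal (Real.sqrt 3 * Real.exp (-γ / 2)) :=
  stmt7_general Q V d hd hV_ent P hP
end

section
/- Let Z ⊂ ℝᵐ₊ be a nonempty convex compact set containing a positive vector, φ(r) = max_{z∈Z} zᵀr, π(h) = sqrt(φ([h]²)) with [h]² the entrywise square, and κ = 6 ln(2√3 m²). Let Θ ∈ S^m with Θ ⪰ 0, Θ ≠ 0, and μ > 0 satisfy κ·φ(diag(Θ)) ≤ μ. Write Θ = QQᵀ with an m×m matrix Q, let V be an m×m orthogonal matrix with all entries of magnitude at most sqrt(2/m), χ a Rademacher random vector, λ = (μ/m)[1;…;1] ∈ ℝᵐ, and H_χ = sqrt(m/μ)·Q Diag(χ) V. Then (a) H_χ Diag(λ) H_χᵀ = Θ for every realization of χ,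 with λ ≥ 0 and Σᵢ λᵢ = μ; and (b) the probability that π(Col_ℓ[H_χ]) ≤ 1 for all ℓ ≤ m is at least 1/2. -/
open MeasureTheory Matrix
open scoped ENNReal

/-- Support function `φ(r) = max_{z ∈ Z} zᵀr` of a set `Z ⊆ ℝᵐ`, as a supremum. -/
noncomputable def suppFn {m : ℕ} (Z : Set (Fin m → ℝ)) (r : Fin m → ℝ) : ℝ :=
  sSup ((fun z => z ⬝ᵥ r) '' Z)

/-!
For fixed coefficients `a`, the Rademacher sum `S = ∑ₖ aₖ χₖ` satisfies
`P(S² > r ∑ₖ aₖ²) ≤ 2 e^{-r/2}`: this is the Chernoff bound, since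
`E e^{sS} = ∏ₖ cosh (s aₖ) ≤ e^{s² ∑ₖ aₖ² / 2}`.
The entry `(i, ℓ)` of `H_χ` is `√(m/μ) ∑ₖ Qᵢₖ Vₖℓ χₖ`, and `|Vₖℓ|² ≤ 2/m` bounds the squared
norm of its coefficient vector by `(2/m) Θᵢᵢ`. Taking `r = κ/2`, a union bound over the `m²`
entries shows that with probability at least `1 - 2m² e^{-κ/4} ≥ 1/2` every entry satisfies
`(H_χ)ᵢℓ² ≤ (κ/μ) Θᵢᵢ`; since `Z ⊆ ℝᵐ₊`, this gives `π(Col_ℓ H_χ)² ≤ (κ/μ) φ(diag Θ) ≤ 1`.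
Part (a) holds because `Diag(χ)² = 1` and `V Vᵀ = 1`.
-/

open Finset Real

def boolSign (b : Bool) : ℝ := if b then 1 else -1

@[simp] lemma boolSign_mul_self (b : Bool) : boolSign b * boolSign b = 1 := by
  cases b <;> norm_num [boolSign]

section Rademacher

variable {ι : Type*} [Fintype ι]

variable (ι) in
noncomputable def rademacher : Measure (ι → Bool) :=
  Measure.pi fun _ => (PMF.uniformOfFintype Bool).toMeasure

instance : IsProbabilityMeasure (rademacher ι) := by
  unfold rademacher; infer_instance

lemma rademacher_real_apply (A : Finset (ι → Bool)) :
    (rademacher ι).real A = #A / 2 ^ Fintype.card ι := by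
  have hsingleton : ∀ χ, rademacher ι {χ} = 2⁻¹ ^ Fintype.card ι := fun χ => by
    rw [rademacher, ← Set.univ_pi_singleton, Measure.pi_pi]
    simp [PMF.uniformOfFintype_apply]
  rw [measureReal_def, ← sum_measure_singleton]
  simp [hsingleton, div_eq_mul_inv]

variable [DecidableEq ι]

lemma sum_exp_sum_mul_boolSign (b : ι → ℝ) :
    ∑ χ : ι → Bool, exp (∑ k, b k * boolSign (χ k)) = ∏ k, 2 * cosh (b k) := by
  have hcosh : ∀ x : ℝ, 2 * cosh x = ∑ c : Bool, exp (x * boolSign c) := fun x => by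
    rw [Fintype.sum_bool, cosh_eq, boolSign, boolSign, if_pos rfl, if_neg Bool.false_ne_true,
      mul_one, mul_neg_one]
    ring
  simp_rw [hcosh, Fintype.prod_sum, exp_sum]

lemma sum_exp_sum_mul_boolSign_le (b : ι → ℝ) :
    ∑ χ : ι → Bool, exp (∑ k, b k * boolSign (χ k)) ≤
      2 ^ Fintype.card ι * exp (∑ k, b k ^ 2 / 2) := by
  rw [sum_exp_sum_mul_boolSign, exp_sum, ← Finset.card_univ, ← prod_const, ← prod_mul_distrib]
  gcongr with k
  exact cosh_le_exp_half_sq _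

lemma card_lt_sum_mul_boolSign_le (a : ι → ℝ) {t : ℝ} (ht : 0 ≤ t)
    (ha : 0 < ∑ k, a k ^ 2) :
    (#{χ : ι → Bool | t < ∑ k, a k * boolSign (χ k)} : ℝ) ≤
      2 ^ Fintype.card ι * exp (-(t ^ 2 / (2 * ∑ k, a k ^ 2))) := by
  set v := ∑ k, a k ^ 2
  set s := t / v
  have hs : 0 ≤ s := by positivity
  have hchernoff : (#{χ : ι → Bool | t < ∑ k, a k * boolSign (χ k)} : ℝ) * exp (s * t) ≤
      2 ^ Fintype.card ι * exp (s ^ 2 * v / 2) := calc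
    _ ≤ ∑ χ ∈ {χ : ι → Bool | t < ∑ k, a k * boolSign (χ k)},
          exp (s * ∑ k, a k * boolSign (χ k)) := by
        rw [← nsmul_eq_mul]
        refine card_nsmul_le_sum _ _ _ fun χ hχ => ?_
        gcongr
        exact (mem_filter.1 hχ).2.le
    _ ≤ ∑ χ : ι → Bool, exp (∑ k, (s * a k) * boolSign (χ k)) := by
        simp_rw [mul_sum, mul_assoc]
        exact sum_le_sum_of_subset_of_nonneg (subset_univ _) fun _ _ _ => (exp_pos _).le
    _ ≤ 2 ^ Fintype.card ι * exp (∑ k, (s * a k) ^ 2 / 2) := sum_exp_sum_mul_boolSign_le _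
    _ = 2 ^ Fintype.card ι * exp (s ^ 2 * v / 2) := by
        simp_rw [mul_pow, ← sum_div, ← mul_sum]; rfl
  have hexp : s ^ 2 * v / 2 - s * t = -(t ^ 2 / (2 * v)) := by
    simp only [s]; field_simp; ring
  rw [← hexp, exp_sub, mul_div_assoc']
  exact (le_div_iff₀ (exp_pos _)).2 hchernoff

lemma card_sq_sum_mul_boolSign_gt_le (a : ι → ℝ) {r : ℝ} (hr : 0 ≤ r) :
    (#{χ : ι → Bool | r * ∑ k, a k ^ 2 < (∑ k, a k * boolSign (χ k)) ^ 2} : ℝ) ≤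
      2 ^ Fintype.card ι * (2 * exp (-(r / 2))) := by
  obtain hv | hv := (sum_nonneg fun k _ => sq_nonneg (a k) : 0 ≤ ∑ k, a k ^ 2).eq_or_lt
  · have ha : ∀ k, a k = 0 := fun k => pow_eq_zero_iff two_ne_zero |>.1 <|
      (sum_eq_zero_iff_of_nonneg fun k _ => sq_nonneg (a k)).1 hv.symm k (mem_univ k)
    simp only [ha, zero_mul, sum_const_zero, zero_pow two_ne_zero, mul_zero, lt_self_iff_false,
      filter_false, card_empty, Nat.cast_zero]
    positivity
  set v := ∑ k, a k ^ 2
  set t := √(r * v)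
  have ht : t ^ 2 / (2 * v) = r / 2 := by
    rw [sq_sqrt (by positivity)]; field_simp [hv.ne']
  have hsplit : ({χ : ι → Bool | r * v < (∑ k, a k * boolSign (χ k)) ^ 2} : Finset _) ⊆
      ({χ : ι → Bool | t < ∑ k, a k * boolSign (χ k)} : Finset _) ∪
        ({χ : ι → Bool | t < ∑ k, -a k * boolSign (χ k)} : Finset _) := by
    intro χ hχ
    have hlt : t < |∑ k, a k * boolSign (χ k)| := by
      rw [← sqrt_sq_eq_abs]; exact sqrt_lt_sqrt (by positivity) (mem_filter.1 hχ).2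
    simp only [neg_mul, sum_neg_distrib, mem_union, mem_filter, mem_univ, true_and]
    exact lt_abs.1 hlt
  have hneg : ∑ k, (-a k) ^ 2 = v := by simp_rw [neg_sq]; rfl
  calc (#{χ : ι → Bool | r * v < (∑ k, a k * boolSign (χ k)) ^ 2} : ℝ)
      ≤ #{χ : ι → Bool | t < ∑ k, a k * boolSign (χ k)} +
          #{χ : ι → Bool | t < ∑ k, -a k * boolSign (χ k)} := by
        exact_mod_cast (card_le_card hsplit).trans (card_union_le _ _)
    _ ≤ 2 ^ Fintype.card ι * exp (-(r / 2)) + 2 ^ Fintype.card ι * exp (-(r / 2)) := by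
        gcongr
        · rw [← ht]; exact card_lt_sum_mul_boolSign_le a (sqrt_nonneg _) hv
        · rw [← ht, ← hneg]; exact card_lt_sum_mul_boolSign_le _ (sqrt_nonneg _) (hneg ▸ hv)
    _ = 2 ^ Fintype.card ι * (2 * exp (-(r / 2))) := by ring

lemma rademacher_real_sq_sum_mul_boolSign_gt_le (a : ι → ℝ) {r : ℝ} (hr : 0 ≤ r) :
    (rademacher ι).real {χ | r * ∑ k, a k ^ 2 < (∑ k, a k * boolSign (χ k)) ^ 2} ≤
      2 * exp (-(r / 2)) := by
  rw [← coe_filter_univ, rademacher_real_apply, div_le_iff₀' (by positivity)]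
  exact card_sq_sum_mul_boolSign_gt_le a hr

lemma one_sub_le_rademacher_real_forall_sq_sum_mul_boolSign_le {J : Type*} [Fintype J]
    (a : J → ι → ℝ) {r : ℝ} (hr : 0 ≤ r) :
    1 - Fintype.card J * (2 * exp (-(r / 2))) ≤ (rademacher ι).real
      {χ | ∀ j, (∑ k, a j k * boolSign (χ k)) ^ 2 ≤ r * ∑ k, a j k ^ 2} := by
  set B := fun j => {χ : ι → Bool | r * ∑ k, a j k ^ 2 < (∑ k, a j k * boolSign (χ k)) ^ 2}
  have hcompl : {χ | ∀ j, (∑ k, a j k * boolSign (χ k)) ^ 2 ≤ r * ∑ k, a j k ^ 2} =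
      (⋃ j, B j)ᶜ := by
    ext χ; simp [B]
  have hunion : (rademacher ι).real (⋃ j, B j) ≤ Fintype.card J * (2 * exp (-(r / 2))) :=
    calc (rademacher ι).real (⋃ j, B j) ≤ ∑ j, (rademacher ι).real (B j) :=
          measureReal_iUnion_fintype_le _
      _ ≤ ∑ _j : J, 2 * exp (-(r / 2)) :=
          sum_le_sum fun j _ => rademacher_real_sq_sum_mul_boolSign_gt_le (a j) hr
      _ = Fintype.card J * (2 * exp (-(r / 2))) := by simp
  rw [hcompl, probReal_compl_eq_one_sub (MeasurableSet.of_discrete)]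
  linarith

end Rademacher

lemma sum_mul_sq_le_of_abs_le {ι : Type*} [Fintype ι] {q v : ι → ℝ} {c : ℝ} (hc : 0 ≤ c)
    (hv : ∀ k, |v k| ≤ √c) : ∑ k, (q k * v k) ^ 2 ≤ c * ∑ k, q k ^ 2 := by
  rw [mul_sum]
  gcongr with k
  rw [mul_pow, mul_comm c]
  gcongr
  rw [← sq_abs]
  exact (le_sqrt (abs_nonneg _) hc).1 (hv k)

lemma Matrix.mul_mul_transpose_of_mul_transpose_eq_one {l n R : Type*} [Fintype n]
    [CommSemiring R] [DecidableEq n] (A : Matrix l n R) {B : Matrix n n R} (hB : B * Bᵀ = 1) :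
    A * B * (A * B)ᵀ = A * Aᵀ := by
  rw [transpose_mul, Matrix.mul_assoc, ← Matrix.mul_assoc B, hB, Matrix.one_mul]

section RandomFactor

variable {l n p : Type*} [Fintype n] [DecidableEq n]

noncomputable def randomFactor (s : ℝ) (Q : Matrix l n ℝ) (V : Matrix n p ℝ)
    (χ : n → Bool) : Matrix l p ℝ :=
  s • (Q * diagonal (fun k => boolSign (χ k)) * V)

lemma randomFactor_mul_diagonal_mul_transpose {s t : ℝ} (hst : s * (t * s) = 1)
    (Q : Matrix l n ℝ) {V : Matrix n n ℝ} (hV : V * Vᵀ = 1) (χ : n → Bool) :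
    randomFactor s Q V χ * diagonal (fun _ : n => t) * (randomFactor s Q V χ)ᵀ = Q * Qᵀ := by
  have hD : diagonal (fun k => boolSign (χ k)) * (diagonal fun k => boolSign (χ k))ᵀ = 1 := by
    simp [diagonal_mul_diagonal]
  rw [randomFactor, ← smul_one_eq_diagonal]
  simp only [transpose_smul, Matrix.smul_mul, Matrix.mul_smul, Matrix.mul_one, smul_smul]
  rw [mul_mul_transpose_of_mul_transpose_eq_one _ hV,
    mul_mul_transpose_of_mul_transpose_eq_one _ hD, hst, one_smul]

lemma randomFactor_apply (s : ℝ) (Q : Matrix l n ℝ) (V : Matrix n p ℝ) (χ : n → Bool)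
    (i : l) (j : p) : randomFactor s Q V χ i j = s * ∑ k, Q i k * V k j * boolSign (χ k) := by
  rw [randomFactor, Matrix.smul_apply, smul_eq_mul, Matrix.mul_apply]
  simp_rw [mul_diagonal, mul_right_comm]

lemma sq_randomFactor_apply_le {s r c : ℝ} (hr : 0 ≤ r) (hc : 0 ≤ c) (Q : Matrix l n ℝ)
    {V : Matrix n p ℝ} {j : p} (hV : ∀ k, |V k j| ≤ √c) {χ : n → Bool} {i : l}
    (hχ : (∑ k, Q i k * V k j * boolSign (χ k)) ^ 2 ≤ r * ∑ k, (Q i k * V k j) ^ 2) :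
    randomFactor s Q V χ i j ^ 2 ≤ s ^ 2 * r * c * (Q * Qᵀ) i i := by
  have hrow : ∑ k, (Q i k * V k j) ^ 2 ≤ c * (Q * Qᵀ) i i := by
    simp_rw [Matrix.mul_apply, transpose_apply, ← sq]
    exact sum_mul_sq_le_of_abs_le hc hV
  rw [randomFactor_apply, mul_pow, mul_assoc _ r, mul_assoc]
  gcongr
  exact hχ.trans (by rw [mul_assoc]; gcongr)

end RandomFactor

lemma suppFn_le_mul_suppFn {m : ℕ} {Z : Set (Fin m → ℝ)} (hZ : ∀ z ∈ Z, ∀ i, 0 ≤ z i)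
    {r r' : Fin m → ℝ} (hbdd : BddAbove ((· ⬝ᵥ r') '' Z)) {c : ℝ} (hc : 0 ≤ c)
    (h : r ≤ c • r') : suppFn Z r ≤ c * suppFn Z r' := by
  rcases Z.eq_empty_or_nonempty with rfl | hne
  · simp [suppFn]
  refine csSup_le (hne.image _) ?_
  rintro _ ⟨z, hz, rfl⟩
  calc z ⬝ᵥ r ≤ z ⬝ᵥ (c • r') := dotProduct_le_dotProduct_of_nonneg_left h (hZ z hz)
    _ = c * (z ⬝ᵥ r') := dotProduct_smul ..
    _ ≤ c * suppFn Z r' := by gcongr; exact le_csSup hbdd ⟨z, hz, rfl⟩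

lemma sqrt_suppFn_sq_le_one {m : ℕ} {Z : Set (Fin m → ℝ)} (hZ : ∀ z ∈ Z, ∀ i, 0 ≤ z i)
    (hZc : IsCompact Z) {x d : Fin m → ℝ} {c : ℝ} (hc : 0 ≤ c)
    (hx : ∀ i, x i ^ 2 ≤ c * d i) (hcd : c * suppFn Z d ≤ 1) :
    √(suppFn Z fun i => x i ^ 2) ≤ 1 := by
  have hbdd : BddAbove ((· ⬝ᵥ d) '' Z) :=
    (hZc.image (continuous_id.dotProduct continuous_const)).bddAbove
  rw [sqrt_le_one]
  exact (suppFn_le_mul_suppFn hZ hbdd hc hx).trans hcd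

lemma one_le_two_mul_sqrt_three_mul_sq {x : ℝ} (hx : 1 ≤ x) : 1 ≤ 2 * √3 * x ^ 2 := by
  have h3 : (1 : ℝ) ≤ √3 := one_le_sqrt.2 (by norm_num)
  nlinarith [one_le_pow₀ (n := 2) hx]

lemma half_le_one_sub_mul_self_mul_exp {x : ℝ} (hx : 1 ≤ x) :
    1 / 2 ≤ 1 - x * x * (2 * exp (-(6 * log (2 * √3 * x ^ 2) / 2 / 2))) := by
  have hy : 0 < 2 * √3 * x ^ 2 := by positivity
  have hsq : exp (6 * log (2 * √3 * x ^ 2) / 4) ^ 2 = (2 * √3 * x ^ 2) ^ 3 := by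
    rw [← exp_nat_mul, ← exp_log hy, ← exp_nat_mul, exp_log hy]
    congr 1; push_cast; ring
  have hcube : (2 * √3 * x ^ 2) ^ 3 = 24 * √3 * x ^ 6 := by
    rw [show (2 * √3 * x ^ 2) ^ 3 = 8 * √3 ^ 2 * √3 * x ^ 6 by ring, sq_sqrt (by norm_num)]
    ring
  have h3 : (1 : ℝ) ≤ √3 := one_le_sqrt.2 (by norm_num)
  have hx4 : x ^ 4 ≤ x ^ 6 := pow_le_pow_right₀ hx (by norm_num)
  have hE : 4 * x ^ 2 ≤ exp (6 * log (2 * √3 * x ^ 2) / 4) := by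
    rw [← pow_le_pow_iff_left₀ (by positivity) (exp_pos _).le two_ne_zero, hsq, hcube]
    nlinarith [mul_le_mul_of_nonneg_right h3 (by positivity : (0 : ℝ) ≤ x ^ 6)]
  rw [exp_neg, show 6 * log (2 * √3 * x ^ 2) / 2 / 2 = 6 * log (2 * √3 * x ^ 2) / 4 by ring]
  generalize exp (6 * log (2 * √3 * x ^ 2) / 4) = E at hE
  have hE0 : 0 < E := by nlinarith
  rw [show x * x * (2 * E⁻¹) = 2 * x ^ 2 / E by ring, le_sub_comm, div_le_iff₀ hE0]
  linarith

theorem stmt8_general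
    {m : ℕ} (hm : 0 < m)
    (Z : Set (Fin m → ℝ))
    (hZcomp : IsCompact Z) (hZnonneg : ∀ z ∈ Z, ∀ i, 0 ≤ z i)
    (κ : ℝ) (hκ : κ = 6 * Real.log (2 * Real.sqrt 3 * m ^ 2))
    (Θ : Matrix (Fin m) (Fin m) ℝ)
    (μ : ℝ) (hμ : 0 < μ)
    (hκΘμ : κ * suppFn Z (fun i => Θ i i) ≤ μ)
    (Q : Matrix (Fin m) (Fin m) ℝ) (hQ : Θ = Q * Qᵀ)
    (V : Matrix (Fin m) (Fin m) ℝ)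
    (hV_orth : Vᵀ * V = 1)
    (hV_ent : ∀ k j, |V k j| ≤ Real.sqrt (2 / m))
    (lam : Fin m → ℝ) (hlam : lam = fun _ => μ / m)
    (Hχ : (Fin m → Bool) → Matrix (Fin m) (Fin m) ℝ)
    (hHχ : ∀ χ, Hχ χ = Real.sqrt (m / μ) •
      (Q * Matrix.diagonal (fun k => if χ k then (1 : ℝ) else -1) * V))
    (P : Measure (Fin m → Bool))
    (hP : P = Measure.pi fun _ => (PMF.uniformOfFintype Bool).toMeasure) :
    (∀ χ : Fin m → Bool, Hχ χ * Matrix.diagonal lam * (Hχ χ)ᵀ = Θ) ∧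
    (∀ i, 0 ≤ lam i) ∧ (∑ i, lam i = μ) ∧
    (1 / 2 : ℝ≥0∞) ≤
      P {χ | ∀ ℓ : Fin m, Real.sqrt (suppFn Z (fun i => (Hχ χ i ℓ) ^ 2)) ≤ 1} := by
  subst hlam hP
  obtain rfl : Hχ = randomFactor √(m / μ) Q V := funext hHχ
  have hm1 : (1 : ℝ) ≤ m := Nat.one_le_cast.2 hm
  have hκ0 : 0 ≤ κ := hκ ▸ mul_nonneg (by norm_num)
    (log_nonneg (one_le_two_mul_sqrt_three_mul_sq hm1))
  have hr : 0 ≤ κ / 2 := by positivity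
  refine ⟨fun χ => ?_, fun _ => by positivity, ?_, ?_⟩
  · rw [hQ]
    refine randomFactor_mul_diagonal_mul_transpose ?_ Q (mul_eq_one_comm.1 hV_orth) χ
    rw [mul_left_comm, mul_self_sqrt (by positivity)]
    field_simp
  · rw [sum_const, card_univ, Fintype.card_fin, nsmul_eq_mul]
    field_simp
  have hprob := one_sub_le_rademacher_real_forall_sq_sum_mul_boolSign_le
    (fun (p : Fin m × Fin m) k => Q p.1 k * V k p.2) hr
  rw [Fintype.card_prod, Fintype.card_fin, Nat.cast_mul] at hprob
  have hhalf := half_le_one_sub_mul_self_mul_exp hm1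
  rw [← hκ] at hhalf
  calc (1 / 2 : ℝ≥0∞) = ENNReal.ofReal (1 / 2) := by
        rw [one_div, one_div, ENNReal.ofReal_inv_of_pos two_pos, ENNReal.ofReal_ofNat]
    _ ≤ ENNReal.ofReal ((rademacher (Fin m)).real _) :=
        ENNReal.ofReal_le_ofReal (hhalf.trans hprob)
    _ = rademacher (Fin m) _ := ofReal_measureReal
    _ ≤ _ := measure_mono ?_
  intro χ hχ ℓ
  refine sqrt_suppFn_sq_le_one hZnonneg hZcomp (c := κ / μ) (by positivity) (fun i => ?_)
    (by rwa [div_mul_eq_mul_div, div_le_one hμ])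
  convert sq_randomFactor_apply_le hr (by positivity) Q (hV_ent · ℓ) (hχ (i, ℓ)) using 1
  rw [hQ, sq_sqrt (by positivity)]
  field_simp

/-- Lemma on randomized contrast generation: with
`κ = 6 ln(2√3 m²)`, `Θ = QQᵀ ⪰ 0`, `Θ ≠ 0`, `μ > 0`, `κ φ(diag Θ) ≤ μ`,
`λ = (μ/m)𝟙`, `H_χ = √(m/μ) Q Diag(χ) V` with `χ` Rademacher and `V`
orthogonal with entries of magnitude ≤ `√(2/m)`:
(a) `H_χ Diag(λ) H_χᵀ = Θ` always, `λ ≥ 0`, `Σᵢ λᵢ = μ`;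
(b) with probability ≥ 1/2 all columns of `H_χ` satisfy `π(·) ≤ 1`. -/
theorem stmt8
    {m : ℕ} (hm : 0 < m)
    (Z : Set (Fin m → ℝ)) (hZne : Z.Nonempty) (hZconv : Convex ℝ Z)
    (hZcomp : IsCompact Z) (hZnonneg : ∀ z ∈ Z, ∀ i, 0 ≤ z i)
    (hZpos : ∃ z ∈ Z, ∀ i, 0 < z i)
    (κ : ℝ) (hκ : κ = 6 * Real.log (2 * Real.sqrt 3 * m ^ 2))
    (Θ : Matrix (Fin m) (Fin m) ℝ) (hΘ : Θ.PosSemidef) (hΘ0 : Θ ≠ 0)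
    (μ : ℝ) (hμ : 0 < μ)
    (hκΘμ : κ * suppFn Z (fun i => Θ i i) ≤ μ)
    (Q : Matrix (Fin m) (Fin m) ℝ) (hQ : Θ = Q * Qᵀ)
    (V : Matrix (Fin m) (Fin m) ℝ)
    (hV_orth : Vᵀ * V = 1)
    (hV_ent : ∀ k j, |V k j| ≤ Real.sqrt (2 / m))
    (lam : Fin m → ℝ) (hlam : lam = fun _ => μ / m)
    (Hχ : (Fin m → Bool) → Matrix (Fin m) (Fin m) ℝ)
    (hHχ : ∀ χ, Hχ χ = Real.sqrt (m / μ) •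
      (Q * Matrix.diagonal (fun k => if χ k then (1 : ℝ) else -1) * V))
    (P : Measure (Fin m → Bool))
    (hP : P = Measure.pi fun _ => (PMF.uniformOfFintype Bool).toMeasure) :
    (∀ χ : Fin m → Bool, Hχ χ * Matrix.diagonal lam * (Hχ χ)ᵀ = Θ) ∧
    (∀ i, 0 ≤ lam i) ∧ (∑ i, lam i = μ) ∧
    (1 / 2 : ℝ≥0∞) ≤
      P {χ | ∀ ℓ : Fin m, Real.sqrt (suppFn Z (fun i => (Hχ χ i ℓ) ^ 2)) ≤ 1} :=
  stmt8_general hm Z hZcomp hZnonneg κ hκ Θ μ hμ hκΘμ Q hQ V hV_orth hV_ent lam hlam Hχ hHχ P hP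
end

section
/- Let X_s ⊂ ℝⁿ and B_* ⊂ ℝ^ν be nonempty convex compact sets. Let 𝕏 ⊆ S^n₊ × ℝ₊ and 𝕌 ⊆ S^ν₊ × ℝ₊ be sets such that: (i) (X,t) ∈ 𝕏 implies zᵀXz ≤ t for all z ∈ X_s, and (U,s') ∈ 𝕌 implies uᵀUu ≤ s' for all u ∈ B_*; (ii) 𝕏 contains a pair (X,t) with X positive definite, and 𝕌 contains a pair (U,s') with U positive definite; (iii) 𝕏 and 𝕌 are closed convex cones closed under increasing the scalar component. For M ∈ S^{ν+n} define 𝓜(M) = inf{ t + s' : (X,t) ∈ 𝕏, (U,s') ∈ 𝕌, Diag(U,X) ⪰ M }. Then 𝓜 is a real-valued convex function on S^{ν+n}, and for every M ∈ S^{ν+n}: 𝓜(M) ≥ max_{u∈B_*, z∈X_s} [u;z]ᵀ M [u;z]. -/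
/-!
Every feasible pair `(U, s')`, `(X, t)` for `M` gives `[u;z]ᵀ M [u;z] ≤ uᵀ U u + zᵀ X z ≤ s' + t`
on `B_* × X_s`; this yields the lower bound and, as `B_*` and `X_s` are nonempty, that the infimum
is bounded below. Feasibility comes from scaling: `Diag(U₀, X₀)` is positive definite, so
`c • Diag(U₀, X₀)` dominates any symmetric `M` for large `c`. Since convex combinations of feasible
pairs for `M₁`, `M₂` are feasible for the same combination of `M₁`, `M₂`, the infimum is convex.
-/

open Matrix

open scoped Pointwise in
theorem convexOn_sInf_of_smul_add_smul_subset {E : Type*} [AddCommMonoid E] [Module ℝ E]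
    {s : Set E} (hs : Convex ℝ s) {F : E → Set ℝ} (hne : ∀ x ∈ s, (F x).Nonempty)
    (hbdd : ∀ x ∈ s, BddBelow (F x))
    (hF : ∀ x ∈ s, ∀ y ∈ s, ∀ a b : ℝ, 0 ≤ a → 0 ≤ b → a + b = 1 →
      a • F x + b • F y ⊆ F (a • x + b • y)) :
    ConvexOn ℝ s fun x => sInf (F x) := by
  refine ⟨hs, fun x hx y hy a b ha hb hab => ?_⟩
  calc sInf (F (a • x + b • y)) ≤ sInf (a • F x + b • F y) :=
        csInf_le_csInf (hbdd _ (hs hx hy ha hb hab))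
          (((hne x hx).smul_set).add (hne y hy).smul_set) (hF x hx y hy a b ha hb hab)
    _ = a • sInf (F x) + b • sInf (F y) := by
      rw [csInf_add (hne x hx).smul_set ((hbdd x hx).smul_of_nonneg ha) (hne y hy).smul_set
        ((hbdd y hy).smul_of_nonneg hb), Real.sInf_smul_of_nonneg ha, Real.sInf_smul_of_nonneg hb]

namespace Matrix

open scoped MatrixOrder in
theorem PosDef.exists_le_smul {m : Type*} [Fintype m] [DecidableEq m] {D M : Matrix m m ℝ}
    (hD : D.PosDef) (hM : M.IsHermitian) : ∃ c : ℝ, 0 ≤ c ∧ M ≤ c • D := by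
  cases isEmpty_or_nonempty m
  · exact ⟨0, le_rfl, (Subsingleton.elim M (0 • D)).le⟩
  obtain ⟨r, hr, hrD⟩ := (CFC.exists_pos_algebraMap_le_iff hD.isHermitian.isSelfAdjoint).2
    fun x hx => hD.isStrictlyPositive.spectrum_pos hx
  obtain ⟨K, hK⟩ := M.finite_real_spectrum.bddAbove
  have hc : 0 ≤ max (K / r) 0 := le_max_right _ _
  refine ⟨max (K / r) 0, hc, ?_⟩
  calc M ≤ algebraMap ℝ _ (max (K / r) 0 * r) :=
        le_algebraMap_of_spectrum_le (fun x hx => (hK hx).trans <|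
          (div_le_iff₀ hr).1 (le_max_left _ _)) hM.isSelfAdjoint
    _ = max (K / r) 0 • algebraMap ℝ _ r := by rw [map_mul, Algebra.smul_def]
    _ ≤ max (K / r) 0 • D := smul_le_smul_of_nonneg_left hrD hc

variable {R l m : Type*} [Fintype l] [Fintype m]

theorem sumElim_dotProduct_fromBlocks_zero_mulVec [CommSemiring R] (A : Matrix l l R)
    (D : Matrix m m R) (u : l → R) (v : m → R) :
    Sum.elim u v ⬝ᵥ fromBlocks A 0 0 D *ᵥ Sum.elim u v = u ⬝ᵥ A *ᵥ u + v ⬝ᵥ D *ᵥ v := by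
  simp [fromBlocks_mulVec, sumElim_dotProduct_sumElim]

theorem PosDef.fromBlocks_zero {A : Matrix l l ℝ} {D : Matrix m m ℝ} (hA : A.PosDef)
    (hD : D.PosDef) : (fromBlocks A 0 0 D).PosDef := by
  refine .of_dotProduct_mulVec_pos (hA.1.fromBlocks conjTranspose_zero hD.1) fun x hx => ?_
  have hu := hA.posSemidef.dotProduct_mulVec_nonneg (x ∘ Sum.inl)
  have hv := hD.posSemidef.dotProduct_mulVec_nonneg (x ∘ Sum.inr)
  rw [star_trivial] at hu hv ⊢
  rw [← Sum.elim_comp_inl_inr x, sumElim_dotProduct_fromBlocks_zero_mulVec]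
  obtain ⟨i | i, hi⟩ := Function.ne_iff.1 hx
  · have := hA.dotProduct_mulVec_pos (x := x ∘ Sum.inl) fun h => hi (congrFun h i)
    rw [star_trivial] at this
    linarith
  · have := hD.dotProduct_mulVec_pos (x := x ∘ Sum.inr) fun h => hi (congrFun h i)
    rw [star_trivial] at this
    linarith

end Matrix

section MajorantCosts

variable {l m : Type*}

def majorantCosts (𝕌 : Set (Matrix l l ℝ × ℝ)) (𝕏 : Set (Matrix m m ℝ × ℝ))
    (M : Matrix (l ⊕ m) (l ⊕ m) ℝ) : Set ℝ :=
  {c | ∃ X t U s', (X, t) ∈ 𝕏 ∧ (U, s') ∈ 𝕌 ∧ (fromBlocks U 0 0 X - M).PosSemidef ∧ c = t + s'}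

variable {𝕌 : Set (Matrix l l ℝ × ℝ)} {𝕏 : Set (Matrix m m ℝ × ℝ)}

open scoped Pointwise in
theorem smul_add_smul_subset_majorantCosts (h𝕌 : Convex ℝ 𝕌) (h𝕏 : Convex ℝ 𝕏)
    {M₁ M₂ : Matrix (l ⊕ m) (l ⊕ m) ℝ} {a b : ℝ} (ha : 0 ≤ a) (hb : 0 ≤ b) (hab : a + b = 1) :
    a • majorantCosts 𝕌 𝕏 M₁ + b • majorantCosts 𝕌 𝕏 M₂ ⊆
      majorantCosts 𝕌 𝕏 (a • M₁ + b • M₂) := by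
  rintro _ ⟨_, ⟨_, ⟨X₁, t₁, U₁, s₁, hX₁, hU₁, hp₁, rfl⟩, rfl⟩, _,
    ⟨_, ⟨X₂, t₂, U₂, s₂, hX₂, hU₂, hp₂, rfl⟩, rfl⟩, rfl⟩
  refine ⟨a • X₁ + b • X₂, a * t₁ + b * t₂, a • U₁ + b • U₂, a * s₁ + b * s₂,
    h𝕏 hX₁ hX₂ ha hb hab, h𝕌 hU₁ hU₂ ha hb hab, ?_, by simp only [smul_eq_mul]; ring⟩
  convert (hp₁.smul ha).add (hp₂.smul hb) using 1
  rw [smul_sub, smul_sub, fromBlocks_smul, fromBlocks_smul, sub_add_sub_comm, fromBlocks_add]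
  simp only [smul_zero, add_zero]

variable [Fintype l] [Fintype m]

theorem sumElim_dotProduct_mulVec_le_of_mem_majorantCosts {B : Set (l → ℝ)} {Z : Set (m → ℝ)}
    (h𝕌 : ∀ p ∈ 𝕌, ∀ u ∈ B, u ⬝ᵥ p.1 *ᵥ u ≤ p.2) (h𝕏 : ∀ p ∈ 𝕏, ∀ z ∈ Z, z ⬝ᵥ p.1 *ᵥ z ≤ p.2)
    {M : Matrix (l ⊕ m) (l ⊕ m) ℝ} {c : ℝ} (hc : c ∈ majorantCosts 𝕌 𝕏 M)
    {u : l → ℝ} {z : m → ℝ} (hu : u ∈ B) (hz : z ∈ Z) :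
    Sum.elim u z ⬝ᵥ M *ᵥ Sum.elim u z ≤ c := by
  obtain ⟨X, t, U, s', hX, hU, hpsd, rfl⟩ := hc
  have := hpsd.dotProduct_mulVec_nonneg (Sum.elim u z)
  rw [star_trivial, sub_mulVec, dotProduct_sub, sub_nonneg,
    sumElim_dotProduct_fromBlocks_zero_mulVec] at this
  linarith [h𝕌 _ hU u hu, h𝕏 _ hX z hz]

theorem majorantCosts_bddBelow {B : Set (l → ℝ)} {Z : Set (m → ℝ)}
    (h𝕌 : ∀ p ∈ 𝕌, ∀ u ∈ B, u ⬝ᵥ p.1 *ᵥ u ≤ p.2) (h𝕏 : ∀ p ∈ 𝕏, ∀ z ∈ Z, z ⬝ᵥ p.1 *ᵥ z ≤ p.2)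
    (hB : B.Nonempty) (hZ : Z.Nonempty) (M : Matrix (l ⊕ m) (l ⊕ m) ℝ) :
    BddBelow (majorantCosts 𝕌 𝕏 M) :=
  let ⟨_, hu⟩ := hB
  let ⟨_, hz⟩ := hZ
  ⟨_, fun _ hc => sumElim_dotProduct_mulVec_le_of_mem_majorantCosts h𝕌 h𝕏 hc hu hz⟩

open scoped MatrixOrder in
theorem majorantCosts_nonempty [DecidableEq l] [DecidableEq m]
    (h𝕌pd : ∃ p ∈ 𝕌, p.1.PosDef) (h𝕏pd : ∃ p ∈ 𝕏, p.1.PosDef)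
    (h𝕌cone : ∀ c : ℝ, 0 ≤ c → ∀ p ∈ 𝕌, (c • p.1, c * p.2) ∈ 𝕌)
    (h𝕏cone : ∀ c : ℝ, 0 ≤ c → ∀ p ∈ 𝕏, (c • p.1, c * p.2) ∈ 𝕏)
    {M : Matrix (l ⊕ m) (l ⊕ m) ℝ} (hM : M.IsHermitian) : (majorantCosts 𝕌 𝕏 M).Nonempty := by
  obtain ⟨⟨U, s'⟩, hU, hUpd⟩ := h𝕌pd
  obtain ⟨⟨X, t⟩, hX, hXpd⟩ := h𝕏pd
  obtain ⟨c, hc, hle⟩ := (hUpd.fromBlocks_zero hXpd).exists_le_smul hM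
  refine ⟨_, c • X, c * t, c • U, c * s', h𝕏cone c hc _ hX, h𝕌cone c hc _ hU, ?_, rfl⟩
  simpa only [fromBlocks_smul, smul_zero] using Matrix.le_iff.1 hle

end MajorantCosts

theorem stmt9_general
    {n ν : ℕ}
    (Xs : Set (Fin n → ℝ)) (hXsne : Xs.Nonempty)
    (Bst : Set (Fin ν → ℝ)) (hBne : Bst.Nonempty)
    (𝕏 : Set (Matrix (Fin n) (Fin n) ℝ × ℝ))
    (𝕌 : Set (Matrix (Fin ν) (Fin ν) ℝ × ℝ))
    -- (i) bounding property, plus containment in S₊ × ℝ₊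
    (h𝕏bd : ∀ p ∈ 𝕏, ∀ z ∈ Xs, z ⬝ᵥ p.1.mulVec z ≤ p.2)
    (h𝕌bd : ∀ p ∈ 𝕌, ∀ u ∈ Bst, u ⬝ᵥ p.1.mulVec u ≤ p.2)
    -- (ii) existence of positive definite pairs
    (h𝕏pd : ∃ p ∈ 𝕏, p.1.PosDef) (h𝕌pd : ∃ p ∈ 𝕌, p.1.PosDef)
    -- (iii) closed convex cones, closed under increasing the scalar component
    (h𝕏cv : Convex ℝ 𝕏)
    (h𝕏cone : ∀ c : ℝ, 0 ≤ c → ∀ p ∈ 𝕏, (c • p.1, c * p.2) ∈ 𝕏)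
    (h𝕌cv : Convex ℝ 𝕌)
    (h𝕌cone : ∀ c : ℝ, 0 ≤ c → ∀ p ∈ 𝕌, (c • p.1, c * p.2) ∈ 𝕌)
    (𝓜 : Matrix (Fin ν ⊕ Fin n) (Fin ν ⊕ Fin n) ℝ → ℝ)
    (h𝓜 : ∀ M, 𝓜 M = sInf {c | ∃ X t U s',
        (X, t) ∈ 𝕏 ∧ (U, s') ∈ 𝕌 ∧
        (Matrix.fromBlocks U 0 0 X - M).PosSemidef ∧ c = t + s'}) :
    (∀ M : Matrix (Fin ν ⊕ Fin n) (Fin ν ⊕ Fin n) ℝ, M.IsSymm →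
        {c | ∃ X t U s', (X, t) ∈ 𝕏 ∧ (U, s') ∈ 𝕌 ∧
          (Matrix.fromBlocks U 0 0 X - M).PosSemidef ∧ c = t + s'}.Nonempty ∧
        BddBelow {c | ∃ X t U s', (X, t) ∈ 𝕏 ∧ (U, s') ∈ 𝕌 ∧
          (Matrix.fromBlocks U 0 0 X - M).PosSemidef ∧ c = t + s'}) ∧
    ConvexOn ℝ {M : Matrix (Fin ν ⊕ Fin n) (Fin ν ⊕ Fin n) ℝ | M.IsSymm} 𝓜 ∧
    (∀ M : Matrix (Fin ν ⊕ Fin n) (Fin ν ⊕ Fin n) ℝ, M.IsSymm →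
      ∀ u ∈ Bst, ∀ z ∈ Xs,
        Sum.elim u z ⬝ᵥ M.mulVec (Sum.elim u z) ≤ 𝓜 M) := by
  have hne : ∀ M ∈ {M : Matrix (Fin ν ⊕ Fin n) (Fin ν ⊕ Fin n) ℝ | M.IsSymm},
      (majorantCosts 𝕌 𝕏 M).Nonempty := fun M hM =>
    majorantCosts_nonempty h𝕌pd h𝕏pd h𝕌cone h𝕏cone (isHermitian_iff_isSymm.2 hM)
  have hbdd := majorantCosts_bddBelow h𝕌bd h𝕏bd hBne hXsne
  refine ⟨fun M hM => ⟨hne M hM, hbdd M⟩, ?_, fun M hM u hu z hz => ?_⟩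
  · rw [show 𝓜 = fun M => sInf (majorantCosts 𝕌 𝕏 M) from funext h𝓜]
    exact convexOn_sInf_of_smul_add_smul_subset
      (fun _ h₁ _ h₂ a b _ _ _ => (h₁.smul a).add (h₂.smul b)) hne (fun M _ => hbdd M)
      fun _ _ _ _ _ _ ha hb hab => smul_add_smul_subset_majorantCosts h𝕌cv h𝕏cv ha hb hab
  · rw [h𝓜 M]
    exact le_csInf (hne M hM) fun _ hc =>
      sumElim_dotProduct_mulVec_le_of_mem_majorantCosts h𝕌bd h𝕏bd hc hu hz

/-- construction of the function `𝓜` from compatible cones: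
with `𝕏`, `𝕌` compatible with `X_s` and `B_*` respectively,
`𝓜(M) = inf{t + s' : (X,t) ∈ 𝕏, (U,s') ∈ 𝕌, Diag(U,X) ⪰ M}` is a real-valued
convex function on `S^{ν+n}` satisfying
`𝓜(M) ≥ max_{u ∈ B_*, z ∈ X_s} [u;z]ᵀ M [u;z]`. -/
theorem stmt9
    {n ν : ℕ}
    (Xs : Set (Fin n → ℝ)) (hXsne : Xs.Nonempty) (hXsconv : Convex ℝ Xs)
    (hXscomp : IsCompact Xs)
    (Bst : Set (Fin ν → ℝ)) (hBne : Bst.Nonempty) (hBconv : Convex ℝ Bst)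
    (hBcomp : IsCompact Bst)
    (𝕏 : Set (Matrix (Fin n) (Fin n) ℝ × ℝ))
    (𝕌 : Set (Matrix (Fin ν) (Fin ν) ℝ × ℝ))
    -- (i) bounding property, plus containment in S₊ × ℝ₊
    (h𝕏sub : ∀ p ∈ 𝕏, p.1.PosSemidef ∧ 0 ≤ p.2)
    (h𝕏bd : ∀ p ∈ 𝕏, ∀ z ∈ Xs, z ⬝ᵥ p.1.mulVec z ≤ p.2)
    (h𝕌sub : ∀ p ∈ 𝕌, p.1.PosSemidef ∧ 0 ≤ p.2)
    (h𝕌bd : ∀ p ∈ 𝕌, ∀ u ∈ Bst, u ⬝ᵥ p.1.mulVec u ≤ p.2)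
    -- (ii) existence of positive definite pairs
    (h𝕏pd : ∃ p ∈ 𝕏, p.1.PosDef) (h𝕌pd : ∃ p ∈ 𝕌, p.1.PosDef)
    -- (iii) closed convex cones, closed under increasing the scalar component
    (h𝕏cl : IsClosed 𝕏) (h𝕏cv : Convex ℝ 𝕏)
    (h𝕏cone : ∀ c : ℝ, 0 ≤ c → ∀ p ∈ 𝕏, (c • p.1, c * p.2) ∈ 𝕏)
    (h𝕏up : ∀ p ∈ 𝕏, ∀ t' : ℝ, p.2 ≤ t' → (p.1, t') ∈ 𝕏)
    (h𝕌cl : IsClosed 𝕌) (h𝕌cv : Convex ℝ 𝕌)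
    (h𝕌cone : ∀ c : ℝ, 0 ≤ c → ∀ p ∈ 𝕌, (c • p.1, c * p.2) ∈ 𝕌)
    (h𝕌up : ∀ p ∈ 𝕌, ∀ s' : ℝ, p.2 ≤ s' → (p.1, s') ∈ 𝕌)
    (𝓜 : Matrix (Fin ν ⊕ Fin n) (Fin ν ⊕ Fin n) ℝ → ℝ)
    (h𝓜 : ∀ M, 𝓜 M = sInf {c | ∃ X t U s',
        (X, t) ∈ 𝕏 ∧ (U, s') ∈ 𝕌 ∧
        (Matrix.fromBlocks U 0 0 X - M).PosSemidef ∧ c = t + s'}) :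
    (∀ M : Matrix (Fin ν ⊕ Fin n) (Fin ν ⊕ Fin n) ℝ, M.IsSymm →
        {c | ∃ X t U s', (X, t) ∈ 𝕏 ∧ (U, s') ∈ 𝕌 ∧
          (Matrix.fromBlocks U 0 0 X - M).PosSemidef ∧ c = t + s'}.Nonempty ∧
        BddBelow {c | ∃ X t U s', (X, t) ∈ 𝕏 ∧ (U, s') ∈ 𝕌 ∧
          (Matrix.fromBlocks U 0 0 X - M).PosSemidef ∧ c = t + s'}) ∧
    ConvexOn ℝ {M : Matrix (Fin ν ⊕ Fin n) (Fin ν ⊕ Fin n) ℝ | M.IsSymm} 𝓜 ∧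
    (∀ M : Matrix (Fin ν ⊕ Fin n) (Fin ν ⊕ Fin n) ℝ, M.IsSymm →
      ∀ u ∈ Bst, ∀ z ∈ Xs,
        Sum.elim u z ⬝ᵥ M.mulVec (Sum.elim u z) ≤ 𝓜 M) :=
  stmt9_general Xs hXsne Bst hBne 𝕏 𝕌 h𝕏bd h𝕌bd h𝕏pd h𝕌pd h𝕏cv h𝕏cone h𝕌cv h𝕌cone 𝓜 h𝓜
end

section
/- Let X ⊂ ℝⁿ be a nonempty convex compact set with symmetrization X_s = (1/2)(X − X), A an m×n matrix, B a ν×n matrix, ‖·‖ a norm on ℝ^ν with conjugate unit ball B_*. Let X ∈ S^n, t ≥ 0 satisfy zᵀXz ≤ t for all z ∈ X_s; let U ∈ S^ν, s' ≥ 0 satisfy uᵀUu ≤ s' for all u ∈ B_*; let H = [h₁,…,h_N] be an m×N matrix and λ ∈ ℝ^N₊ with Θ = H Diag(λ) Hᵀ and Σ_ℓ λ_ℓ ≤ μ. If the symmetric (ν+n)×(ν+n) block matrix with blocks [U, (1/2)B; (1/2)Bᵀ, AᵀΘA + X] is positive semidefinite, then 𝔐[H] := max{‖Bz‖ : z ∈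 2X_s, ‖HᵀAz‖_∞ ≤ 2} ≤ 2(t + s' + μ). -/
/-!
With `z = (x - y) / 2`, evaluating the PSD block form at `(-u, z)` gives
`uᵀB(x - y) ≤ 2 (uᵀUu + zᵀ(AᵀΘA + X)z)`. The three quadratic forms are bounded by `s'`, `μ`
and `t`: the middle one equals `Σ λ_ℓ (h_ℓᵀAz)²` with every `|h_ℓᵀAz| ≤ 1`. Finally, by
Hahn–Banach, `‖B(x - y)‖ = uᵀB(x - y)` for some `u` in the dual unit ball `B_*`.
-/

open Matrix

theorem Seminorm.exists_dual_eq_and_abs_le {E : Type*} [AddCommGroup E] [Module ℝ E]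
    (p : Seminorm ℝ E) (x : E) :
    ∃ g : Module.Dual ℝ E, g x = p x ∧ ∀ y, |g y| ≤ p y := by
  have hker : ∀ c : ℝ, c • x = 0 → c • p x = 0 := fun c hc => by
    have h : |c| * p x = 0 := by rw [← Real.norm_eq_abs, ← map_smul_eq_mul, hc, map_zero]
    simpa [abs_eq_zero] using h
  set f := LinearPMap.mkSpanSingleton' (σ := RingHom.id ℝ) x (p x) hker
  have hfp : ∀ y : f.domain, f.toFun y ≤ p y := by
    rintro ⟨_, hy⟩
    obtain ⟨c, rfl⟩ := Submodule.mem_span_singleton.1 hy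
    calc f.toFun ⟨c • x, hy⟩ = c * p x := LinearPMap.mkSpanSingleton'_apply x (p x) hker c hy
      _ ≤ |c| * p x := mul_le_mul_of_nonneg_right (le_abs_self c) (apply_nonneg p x)
      _ = p (c • x) := by rw [map_smul_eq_mul, Real.norm_eq_abs]
  obtain ⟨g, hgf, hgp⟩ := Module.Dual.exists_extension_of_le_seminorm_real f.domain f.toFun hfp
  have hx : x ∈ f.domain := Submodule.mem_span_singleton_self x
  exact ⟨g, (hgf ⟨x, hx⟩).trans (LinearPMap.mkSpanSingleton'_apply_self x (p x) hker hx), hgp⟩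

theorem Module.Dual.apply_eq_dotProduct {R ι : Type*} [CommSemiring R] [Fintype ι]
    [DecidableEq ι] (g : Module.Dual R (ι → R)) (y : ι → R) :
    g y = (fun i => g (Pi.single i 1)) ⬝ᵥ y := by
  conv_lhs => rw [← Finset.univ_sum_single y]
  simp only [map_sum, dotProduct]
  refine Finset.sum_congr rfl fun i _ => ?_
  rw [mul_comm, ← smul_eq_mul, ← map_smul, ← Pi.single_smul, smul_eq_mul, mul_one]

theorem Seminorm.exists_dotProduct_eq_and_le {ι : Type*} [Fintype ι]
    (p : Seminorm ℝ (ι → ℝ)) (w : ι → ℝ) :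
    ∃ u : ι → ℝ, u ⬝ᵥ w = p w ∧ ∀ y, u ⬝ᵥ y ≤ p y := by
  classical
  obtain ⟨g, hgw, hgp⟩ := p.exists_dual_eq_and_abs_le w
  refine ⟨fun i => g (Pi.single i 1), ?_, fun y => ?_⟩
  · rw [← g.apply_eq_dotProduct, hgw]
  · rw [← g.apply_eq_dotProduct]
    exact (le_abs_self _).trans (hgp y)

theorem Matrix.PosSemidef.two_mul_dotProduct_mulVec_le {m n : Type*} [Fintype m] [Fintype n]
    {U : Matrix m m ℝ} {C : Matrix m n ℝ} {D : Matrix n n ℝ}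
    (h : (fromBlocks U C Cᵀ D).PosSemidef) (u : m → ℝ) (z : n → ℝ) :
    2 * (u ⬝ᵥ C *ᵥ z) ≤ u ⬝ᵥ U *ᵥ u + z ⬝ᵥ D *ᵥ z := by
  have hnonneg := h.dotProduct_mulVec_nonneg (Sum.elim (-u) z)
  have hCt : z ⬝ᵥ Cᵀ *ᵥ u = u ⬝ᵥ C *ᵥ z := by
    rw [dotProduct_mulVec, vecMul_transpose, dotProduct_comm]
  simp only [star_trivial, fromBlocks_mulVec, sumElim_dotProduct_sumElim, Sum.elim_comp_inl,
    Sum.elim_comp_inr, mulVec_neg, dotProduct_add, neg_dotProduct, dotProduct_neg, neg_neg,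
    hCt] at hnonneg
  linarith

theorem Matrix.dotProduct_transpose_mul_diagonal_mul_mulVec {R m n : Type*} [CommSemiring R]
    [Fintype m] [Fintype n] [DecidableEq m] (M : Matrix m n R) (d : m → R) (z : n → R) :
    z ⬝ᵥ (Mᵀ * diagonal d * M) *ᵥ z = ∑ i, d i * (M *ᵥ z) i ^ 2 := by
  rw [← mulVec_mulVec, ← mulVec_mulVec, dotProduct_mulVec, vecMul_transpose, dotProduct]
  refine Finset.sum_congr rfl fun i _ => ?_
  rw [mulVec_diagonal]
  ring

theorem sum_mul_sq_le_sum_of_norm_le_one {ι : Type*} [Fintype ι] {d v : ι → ℝ}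
    (hd : ∀ i, 0 ≤ d i) (hv : ‖v‖ ≤ 1) : ∑ i, d i * v i ^ 2 ≤ ∑ i, d i :=
  Finset.sum_le_sum fun i _ => mul_le_of_le_one_right (hd i)
    (sq_le_one_iff_abs_le_one _ |>.2 ((norm_le_pi_norm v i).trans hv))

theorem stmt10_general
    {n m ν N : ℕ}
    (Xset : Set (Fin n → ℝ))
    (A : Matrix (Fin m) (Fin n) ℝ) (B : Matrix (Fin ν) (Fin n) ℝ)
    (nrm : (Fin ν → ℝ) → ℝ)
    (nrm_add : ∀ u v, nrm (u + v) ≤ nrm u + nrm v)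
    (nrm_smul : ∀ (c : ℝ) u, nrm (c • u) = |c| * nrm u)
    (nrmStar : (Fin ν → ℝ) → ℝ)
    (hnrmStar : ∀ u, nrmStar u = sSup ((fun y => u ⬝ᵥ y) '' {y | nrm y ≤ 1}))
    (X : Matrix (Fin n) (Fin n) ℝ) (t : ℝ)
    (hXt : ∀ x ∈ Xset, ∀ y ∈ Xset,
      ((2⁻¹ : ℝ) • (x - y)) ⬝ᵥ X.mulVec ((2⁻¹ : ℝ) • (x - y)) ≤ t)
    (U : Matrix (Fin ν) (Fin ν) ℝ) (s' : ℝ)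
    (hUs : ∀ u : Fin ν → ℝ, nrmStar u ≤ 1 → u ⬝ᵥ U.mulVec u ≤ s')
    (H : Matrix (Fin m) (Fin N) ℝ) (lam : Fin N → ℝ) (hlam : ∀ ℓ, 0 ≤ lam ℓ)
    (Θ : Matrix (Fin m) (Fin m) ℝ) (hΘ : Θ = H * Matrix.diagonal lam * Hᵀ)
    (μ : ℝ) (hμ : ∑ ℓ, lam ℓ ≤ μ)
    (hblock : (Matrix.fromBlocks U ((2⁻¹ : ℝ) • B) ((2⁻¹ : ℝ) • Bᵀ)
        (Aᵀ * Θ * A + X)).PosSemidef) :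
    ∀ x ∈ Xset, ∀ y ∈ Xset,
      ‖Hᵀ.mulVec (A.mulVec (x - y))‖ ≤ 2 →
      nrm (B.mulVec (x - y)) ≤ 2 * (t + s' + μ) := by
  intro x hx y hy hHz
  set z := (2⁻¹ : ℝ) • (x - y)
  have hΘz : z ⬝ᵥ (Aᵀ * Θ * A) *ᵥ z ≤ μ := by
    have hv : ‖(Hᵀ * A) *ᵥ z‖ ≤ 1 := by
      rw [mulVec_smul, norm_smul, ← mulVec_mulVec, Real.norm_of_nonneg (by norm_num)]
      linarith
    rw [hΘ, show Aᵀ * (H * diagonal lam * Hᵀ) * A = (Hᵀ * A)ᵀ * diagonal lam * (Hᵀ * A) by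
      simp only [transpose_mul, transpose_transpose, Matrix.mul_assoc],
      dotProduct_transpose_mul_diagonal_mul_mulVec]
    exact (sum_mul_sq_le_sum_of_norm_le_one hlam hv).trans hμ
  obtain ⟨u, hu_eq, hu_le⟩ := (Seminorm.of (𝕜 := ℝ) nrm nrm_add
    fun c v => by rw [nrm_smul, Real.norm_eq_abs]).exists_dotProduct_eq_and_le (B *ᵥ (x - y))
  change u ⬝ᵥ _ = nrm _ at hu_eq
  change ∀ w, u ⬝ᵥ w ≤ nrm w at hu_le
  have hu_star : nrmStar u ≤ 1 := by
    rw [hnrmStar]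
    refine Real.sSup_le ?_ zero_le_one
    rintro _ ⟨w, hw, rfl⟩
    exact (hu_le w).trans hw
  rw [← transpose_smul] at hblock
  have hpsd := hblock.two_mul_dotProduct_mulVec_le u z
  calc nrm (B *ᵥ (x - y)) = 2 * (2 * (u ⬝ᵥ ((2⁻¹ : ℝ) • B) *ᵥ z)) := by
        rw [← hu_eq]
        simp only [z, smul_mulVec, mulVec_smul, dotProduct_smul, smul_eq_mul]
        ring
    _ ≤ 2 * (t + s' + μ) := by
        have hXz : z ⬝ᵥ X *ᵥ z ≤ t := hXt x hx y hy
        have hUu := hUs u hu_star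
        rw [add_mulVec, dotProduct_add] at hpsd
        linarith

/-- risk bound used in Proposition on the second design: if
`zᵀXz ≤ t` on `X_s`, `uᵀUu ≤ s'` on the conjugate unit ball `B_*`,
`Θ = H Diag(λ) Hᵀ` with `λ ≥ 0`, `Σλ ≤ μ`, and the block matrix
`[U, ½B; ½Bᵀ, AᵀΘA + X]` is PSD, then
`𝔐[H] = max{‖Bz‖ : z ∈ 2X_s, ‖HᵀAz‖_∞ ≤ 2} ≤ 2(t + s' + μ)`. -/
theorem stmt10
    {n m ν N : ℕ}
    (Xset : Set (Fin n → ℝ)) (hXne : Xset.Nonempty) (hXconv : Convex ℝ Xset)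
    (hXcomp : IsCompact Xset)
    (A : Matrix (Fin m) (Fin n) ℝ) (B : Matrix (Fin ν) (Fin n) ℝ)
    (nrm : (Fin ν → ℝ) → ℝ)
    (nrm_add : ∀ u v, nrm (u + v) ≤ nrm u + nrm v)
    (nrm_smul : ∀ (c : ℝ) u, nrm (c • u) = |c| * nrm u)
    (nrm_eq_zero : ∀ u, nrm u = 0 ↔ u = 0)
    (nrmStar : (Fin ν → ℝ) → ℝ)
    (hnrmStar : ∀ u, nrmStar u = sSup ((fun y => u ⬝ᵥ y) '' {y | nrm y ≤ 1}))
    (X : Matrix (Fin n) (Fin n) ℝ) (hXsymm : X.IsSymm) (t : ℝ) (ht : 0 ≤ t)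
    (hXt : ∀ x ∈ Xset, ∀ y ∈ Xset,
      ((2⁻¹ : ℝ) • (x - y)) ⬝ᵥ X.mulVec ((2⁻¹ : ℝ) • (x - y)) ≤ t)
    (U : Matrix (Fin ν) (Fin ν) ℝ) (hUsymm : U.IsSymm) (s' : ℝ) (hs' : 0 ≤ s')
    (hUs : ∀ u : Fin ν → ℝ, nrmStar u ≤ 1 → u ⬝ᵥ U.mulVec u ≤ s')
    (H : Matrix (Fin m) (Fin N) ℝ) (lam : Fin N → ℝ) (hlam : ∀ ℓ, 0 ≤ lam ℓ)
    (Θ : Matrix (Fin m) (Fin m) ℝ) (hΘ : Θ = H * Matrix.diagonal lam * Hᵀ)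
    (μ : ℝ) (hμ : ∑ ℓ, lam ℓ ≤ μ)
    (hblock : (Matrix.fromBlocks U ((2⁻¹ : ℝ) • B) ((2⁻¹ : ℝ) • Bᵀ)
        (Aᵀ * Θ * A + X)).PosSemidef) :
    ∀ x ∈ Xset, ∀ y ∈ Xset,
      ‖Hᵀ.mulVec (A.mulVec (x - y))‖ ≤ 2 →
      nrm (B.mulVec (x - y)) ≤ 2 * (t + s' + μ) :=
  stmt10_general Xset A B nrm nrm_add nrm_smul nrmStar hnrmStar X t hXt U s' hUs H lam hlam Θ hΘ μ
    hμ hblock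
end

section
/- Let p(·) be an absolute norm on ℝ^N and r(·) an absolute norm on ℝ^N that fits p, i.e., p(x) ≤ 1 implies r([x]²) ≤ 1, where [x]² is the entrywise square. Define the norm p⁺ on S^N by p⁺(Y) = p([p(Col₁[Y]); … ; p(Col_N[Y])]), and let [p⁺]_* and r_* be the norms conjugate to p⁺ (with respect to the Frobenius inner product on S^N) and to r (on ℝ^N), respectively. If V ∈ S^N with V ⪰ 0, and there exist W ∈ S^N and w ∈ ℝ^N with w ≥ 0 such that V ⪯ W + Diag(w) and [p⁺]_*(W) + r_*(w) ≤ τ, then xᵀVx ≤ τ for every x ∈ ℝ^N with p(x) ≤ 1. -/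
/-!
On the unit ball of `p`, `xᵀVx ≤ xᵀWx + wᵀ[x]² = Tr(W xxᵀ) + wᵀ[x]²`, and `xxᵀ` and `[x]²` are
feasible points of the two suprema defining `[p⁺]_*(W)` and `r_*(w)`: `xxᵀ` is symmetric with
`p⁺(xxᵀ) = p(x)² ≤ 1`, and `r([x]²) ≤ 1` because `r` fits `p`. Both sets are bounded above, so
`sSup` is not its junk value, because an absolute norm `q` dominates every coordinate:
`|vᵢ| q(eᵢ) ≤ q(v)`.
-/

open Matrix

theorem dotProduct_le_sum_abs_mul {ι : Type*} [Fintype ι] (w : ι → ℝ) {v b : ι → ℝ}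
    (h : ∀ i, |v i| ≤ b i) :
    w ⬝ᵥ v ≤ ∑ i, |w i| * b i :=
  Finset.sum_le_sum fun i _ => calc
    w i * v i ≤ |w i| * |v i| := (le_abs_self _).trans (abs_mul _ _).le
    _ ≤ |w i| * b i := mul_le_mul_of_nonneg_left (h i) (abs_nonneg _)

section AbsoluteNorm

variable {ι : Type*} [DecidableEq ι] {q : (ι → ℝ) → ℝ}

theorem abs_apply_mul_apply_single_le (q_add : ∀ x y, q (x + y) ≤ q x + q y)
    (q_smul : ∀ (c : ℝ) x, q (c • x) = |c| * q x) (q_abs : ∀ x, q x = q (fun i => |x i|))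
    (v : ι → ℝ) (i : ι) : |v i| * q (Pi.single i 1) ≤ q v := by
  -- `v` and `v` with every entry but the `i`-th negated have the same norm and sum to `2 vᵢ eᵢ`.
  set v' := Function.update (-v) i (v i)
  have hv' : q v' = q v := by
    rw [q_abs v', q_abs v]
    congr 1
    ext j
    rcases eq_or_ne j i with rfl | hj <;> simp [v', *]
  have hsum : v + v' = (2 * v i) • Pi.single i 1 := by
    ext j
    rcases eq_or_ne j i with rfl | hj <;> simp [v', *]
    ring
  have := q_add v v'
  rw [hsum, q_smul, hv', abs_mul, abs_two] at this
  linarith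

theorem apply_single_one_pos (q_add : ∀ x y, q (x + y) ≤ q x + q y)
    (q_smul : ∀ (c : ℝ) x, q (c • x) = |c| * q x) (q_eq_zero : ∀ x, q x = 0 ↔ x = 0) (i : ι) :
    0 < q (Pi.single i 1) :=
  (apply_nonneg (Seminorm.of q q_add q_smul) _).lt_of_ne' fun h => by
    simpa using (q_eq_zero _).1 h

theorem abs_apply_le_div_apply_single (q_add : ∀ x y, q (x + y) ≤ q x + q y)
    (q_smul : ∀ (c : ℝ) x, q (c • x) = |c| * q x) (q_eq_zero : ∀ x, q x = 0 ↔ x = 0)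
    (q_abs : ∀ x, q x = q (fun i => |x i|)) {v : ι → ℝ} {c : ℝ} (hv : q v ≤ c) (i : ι) :
    |v i| ≤ c / q (Pi.single i 1) := by
  rw [le_div_iff₀ (apply_single_one_pos q_add q_smul q_eq_zero i)]
  exact (abs_apply_mul_apply_single_le q_add q_smul q_abs v i).trans hv

variable [Fintype ι]

theorem bddAbove_dotProduct_image (q_add : ∀ x y, q (x + y) ≤ q x + q y)
    (q_smul : ∀ (c : ℝ) x, q (c • x) = |c| * q x) (q_eq_zero : ∀ x, q x = 0 ↔ x = 0)
    (q_abs : ∀ x, q x = q (fun i => |x i|)) (w : ι → ℝ) :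
    BddAbove ((fun v => w ⬝ᵥ v) '' {v | q v ≤ 1}) := by
  refine ⟨∑ i, |w i| * (1 / q (Pi.single i 1)), ?_⟩
  rintro _ ⟨v, hv, rfl⟩
  exact dotProduct_le_sum_abs_mul w
    (abs_apply_le_div_apply_single q_add q_smul q_eq_zero q_abs hv)

theorem bddAbove_trace_mul_image (q_add : ∀ x y, q (x + y) ≤ q x + q y)
    (q_smul : ∀ (c : ℝ) x, q (c • x) = |c| * q x) (q_eq_zero : ∀ x, q x = 0 ↔ x = 0)
    (q_abs : ∀ x, q x = q (fun i => |x i|)) (W : Matrix ι ι ℝ) :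
    BddAbove ((fun Y : Matrix ι ι ℝ => (W * Y).trace) ''
      {Y | q (fun j => q (fun i => Y i j)) ≤ 1}) := by
  set e : ι → ℝ := fun i => q (Pi.single i 1)
  refine ⟨∑ i, ∑ j, |W i j| * (1 / e i / e j), ?_⟩
  rintro _ ⟨Y, hY, rfl⟩
  have hcol (i : ι) : q (fun j => Y j i) ≤ 1 / e i :=
    (le_abs_self _).trans (abs_apply_le_div_apply_single q_add q_smul q_eq_zero q_abs hY i)
  exact Finset.sum_le_sum fun i _ => dotProduct_le_sum_abs_mul (W i)
    fun j => abs_apply_le_div_apply_single q_add q_smul q_eq_zero q_abs (hcol i) j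

end AbsoluteNorm

theorem dotProduct_mulVec_le_of_posSemidef {ι : Type*} [Fintype ι] [DecidableEq ι]
    {V W : Matrix ι ι ℝ} {w : ι → ℝ} (h : (W + diagonal w - V).PosSemidef) (x : ι → ℝ) :
    x ⬝ᵥ V *ᵥ x ≤ x ⬝ᵥ W *ᵥ x + w ⬝ᵥ (fun i => x i ^ 2) := by
  have hdiag : x ⬝ᵥ diagonal w *ᵥ x = w ⬝ᵥ (fun i => x i ^ 2) := by
    simp only [mulVec_diagonal, dotProduct]
    exact Finset.sum_congr rfl fun i _ => by ring
  have := h.dotProduct_mulVec_nonneg x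
  rw [star_trivial, sub_mulVec, add_mulVec, dotProduct_sub, dotProduct_add, hdiag] at this
  linarith

theorem trace_mul_vecMulVec_self {ι R : Type*} [Fintype ι] [CommSemiring R] (W : Matrix ι ι R)
    (x : ι → R) :
    (W * vecMulVec x x).trace = x ⬝ᵥ W *ᵥ x := by
  rw [mul_vecMulVec, trace_vecMulVec, dotProduct_comm]

theorem apply_apply_cols_vecMulVec_self {ι : Type*} {q : (ι → ℝ) → ℝ}
    (q_smul : ∀ (c : ℝ) x, q (c • x) = |c| * q x) (q_abs : ∀ x, q x = q (fun i => |x i|))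
    (hq : ∀ x, 0 ≤ q x) (x : ι → ℝ) :
    q (fun j => q (fun i => vecMulVec x x i j)) = q x ^ 2 := by
  have hcol (j : ι) : (fun i => vecMulVec x x i j) = x j • x := by
    ext i; simp [vecMulVec_apply, mul_comm]
  simp only [hcol, q_smul]
  rw [show (fun j => |x j| * q x) = q x • fun j => |x j| by ext; simp [mul_comm],
    q_smul, ← q_abs, abs_of_nonneg (hq x), sq]

theorem stmt11_general
    {N : ℕ}
    (p r : (Fin N → ℝ) → ℝ)
    (p_add : ∀ x y, p (x + y) ≤ p x + p y)
    (p_smul : ∀ (c : ℝ) x, p (c • x) = |c| * p x)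
    (p_eq_zero : ∀ x, p x = 0 ↔ x = 0)
    (p_abs : ∀ x, p x = p (fun i => |x i|))
    (r_add : ∀ x y, r (x + y) ≤ r x + r y)
    (r_smul : ∀ (c : ℝ) x, r (c • x) = |c| * r x)
    (r_eq_zero : ∀ x, r x = 0 ↔ x = 0)
    (r_abs : ∀ x, r x = r (fun i => |x i|))
    -- `r` fits `p`
    (r_fits : ∀ x : Fin N → ℝ, p x ≤ 1 → r (fun i => (x i) ^ 2) ≤ 1)
    (V W : Matrix (Fin N) (Fin N) ℝ)
    (w : Fin N → ℝ)
    (hdom : (W + Matrix.diagonal w - V).PosSemidef)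
    (τ : ℝ)
    -- `[p⁺]_*(W) + r_*(w) ≤ τ`, with `p⁺(Y) = p(j ↦ p(Col_j Y))` and the
    -- conjugates taken w.r.t. the Frobenius inner product on `S^N` and the
    -- standard inner product on `ℝ^N`
    (hτ : sSup ((fun Y : Matrix (Fin N) (Fin N) ℝ => (W * Y).trace) ''
            {Y | Y.IsSymm ∧ p (fun j => p (fun i => Y i j)) ≤ 1})
          + sSup ((fun v => w ⬝ᵥ v) '' {v | r v ≤ 1}) ≤ τ) :
    ∀ x : Fin N → ℝ, p x ≤ 1 → x ⬝ᵥ V.mulVec x ≤ τ := by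
  intro x hx
  have hp_nonneg : ∀ y, 0 ≤ p y := apply_nonneg (Seminorm.of p p_add p_smul)
  have hxWx : x ⬝ᵥ W *ᵥ x ≤ sSup ((fun Y : Matrix (Fin N) (Fin N) ℝ => (W * Y).trace) ''
      {Y | Y.IsSymm ∧ p (fun j => p (fun i => Y i j)) ≤ 1}) := by
    refine le_csSup ((bddAbove_trace_mul_image p_add p_smul p_eq_zero p_abs W).mono
      (Set.image_mono fun Y hY => hY.2)) ⟨vecMulVec x x, ⟨?_, ?_⟩, trace_mul_vecMulVec_self W x⟩
    · exact transpose_vecMulVec x x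
    · exact (apply_apply_cols_vecMulVec_self p_smul p_abs hp_nonneg x).trans_le
        (pow_le_one₀ (hp_nonneg x) hx)
  have hwx : w ⬝ᵥ (fun i => x i ^ 2) ≤ sSup ((fun v => w ⬝ᵥ v) '' {v | r v ≤ 1}) :=
    le_csSup (bddAbove_dotProduct_image r_add r_smul r_eq_zero r_abs w)
      ⟨_, r_fits x hx, rfl⟩
  linarith [dotProduct_mulVec_le_of_posSemidef hdom x]

/-- Proposition on compatibility via absolute norms: let `p` be
an absolute norm on `ℝ^N`, `r` an absolute norm fitting `p`, `p⁺` the induced norm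
on `S^N`, and `[p⁺]_*`, `r_*` the conjugate norms.  If `V ⪰ 0` and
`V ⪯ W + Diag(w)` with `w ≥ 0` and `[p⁺]_*(W) + r_*(w) ≤ τ`, then `xᵀVx ≤ τ`
whenever `p(x) ≤ 1`. -/
theorem stmt11
    {N : ℕ}
    (p r : (Fin N → ℝ) → ℝ)
    (p_add : ∀ x y, p (x + y) ≤ p x + p y)
    (p_smul : ∀ (c : ℝ) x, p (c • x) = |c| * p x)
    (p_eq_zero : ∀ x, p x = 0 ↔ x = 0)
    (p_abs : ∀ x, p x = p (fun i => |x i|))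
    (r_add : ∀ x y, r (x + y) ≤ r x + r y)
    (r_smul : ∀ (c : ℝ) x, r (c • x) = |c| * r x)
    (r_eq_zero : ∀ x, r x = 0 ↔ x = 0)
    (r_abs : ∀ x, r x = r (fun i => |x i|))
    -- `r` fits `p`
    (r_fits : ∀ x : Fin N → ℝ, p x ≤ 1 → r (fun i => (x i) ^ 2) ≤ 1)
    (V W : Matrix (Fin N) (Fin N) ℝ) (hV : V.PosSemidef) (hW : W.IsSymm)
    (w : Fin N → ℝ) (hw : ∀ i, 0 ≤ w i)
    (hdom : (W + Matrix.diagonal w - V).PosSemidef)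
    (τ : ℝ)
    -- `[p⁺]_*(W) + r_*(w) ≤ τ`, with `p⁺(Y) = p(j ↦ p(Col_j Y))` and the
    -- conjugates taken w.r.t. the Frobenius inner product on `S^N` and the
    -- standard inner product on `ℝ^N`
    (hτ : sSup ((fun Y : Matrix (Fin N) (Fin N) ℝ => (W * Y).trace) ''
            {Y | Y.IsSymm ∧ p (fun j => p (fun i => Y i j)) ≤ 1})
          + sSup ((fun v => w ⬝ᵥ v) '' {v | r v ≤ 1}) ≤ τ) :
    ∀ x : Fin N → ℝ, p x ≤ 1 → x ⬝ᵥ V.mulVec x ≤ τ :=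
  stmt11_general p r p_add p_smul p_eq_zero p_abs r_add r_smul r_eq_zero r_abs r_fits V W w hdom τ
    hτ
end

section
/- Let L, N be positive integers, and for each ℓ ≤ L let d_ℓ be a positive integer and R^{ℓ1},…,R^{ℓN} ∈ S^{d_ℓ}; define R_ℓ[y] = Σ_{i=1}^N y_i R^{ℓi} for y ∈ ℝ^N. Let 𝓡 ⊂ ℝ^L₊ be a nonempty convex compact set, and let Y = { y ∈ ℝ^N : ∃ r ∈ 𝓡 such that R_ℓ[y]² ⪯ r_ℓ I_{d_ℓ} for all ℓ ≤ L }. Let M be an n×N matrix and X = M·Y. Suppose Λ_ℓ ∈ S^{d_ℓ} with Λ_ℓ ⪰ 0 for each ℓ, and V ∈ S^n, τ ≥ 0 satisfy MᵀVM ⪯ Σ_ℓ 𝓡*_ℓ[Λ_ℓ] and φ_𝓡(λ[Λ]) ≤ τ, where (𝓡*_ℓ[Λ_ℓ])_{ij} = Tr(R^{ℓi} Λ_ℓ R^{ℓj}), λ[Λ] = (Tr(Λ₁),…,Tr(Λ_L)), and φ_𝓡(λ) = max_{r∈𝓡} rᵀλ. Then xᵀVx ≤ τ for every x ∈ X. 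-/
/-!
For `x = M y` with `R_ℓ[y]² ⪯ r_ℓ I`, `r ∈ 𝓡`:
`xᵀVx = yᵀMᵀVMy ≤ Σ_ℓ yᵀ𝓡*_ℓ[Λ_ℓ]y = Σ_ℓ Tr(R_ℓ[y] Λ_ℓ R_ℓ[y]) ≤ Σ_ℓ r_ℓ Tr Λ_ℓ ≤ φ_𝓡(λ[Λ]) ≤ τ`,
the second inequality because `Tr(Λ P) ≥ 0` for `Λ, P ⪰ 0`.
-/

open Matrix

namespace Matrix

variable {ι m n 𝕜 : Type*} [Fintype ι] [Fintype m] [Fintype n]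

theorem dotProduct_mulVec_transpose_mul_mul {α : Type*} [CommSemiring α]
    (M : Matrix m n α) (V : Matrix m m α) (y : n → α) :
    y ⬝ᵥ (Mᵀ * V * M) *ᵥ y = M *ᵥ y ⬝ᵥ V *ᵥ (M *ᵥ y) := by
  rw [← mulVec_mulVec, ← mulVec_mulVec, dotProduct_mulVec, vecMul_transpose]

theorem dotProduct_mulVec_of_trace_mul_mul {α : Type*} [CommSemiring α]
    (R : ι → Matrix m m α) (Λ : Matrix m m α) (y : ι → α) :
    y ⬝ᵥ (of fun i j => (R i * Λ * R j).trace) *ᵥ y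
      = ((∑ i, y i • R i) * Λ * ∑ i, y i • R i).trace := by
  simp only [dotProduct, mulVec, of_apply, Finset.sum_mul, Finset.mul_sum, smul_mul,
    Matrix.mul_smul, trace_sum, trace_smul, smul_eq_mul]
  rw [Finset.sum_comm]
  exact Finset.sum_congr rfl fun i _ => Finset.sum_congr rfl fun j _ => by ring

theorem PosSemidef.dotProduct_mulVec_le_of_sub {A B : Matrix n n ℝ}
    (hAB : (A - B).PosSemidef) (y : n → ℝ) : y ⬝ᵥ B *ᵥ y ≤ y ⬝ᵥ A *ᵥ y := by
  have := hAB.dotProduct_mulVec_nonneg y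
  rw [sub_mulVec, dotProduct_sub, star_trivial] at this
  exact sub_nonneg.mp this

variable [RCLike 𝕜]

open scoped ComplexOrder

open scoped MatrixOrder in
theorem PosSemidef.trace_mul_nonneg {A B : Matrix n n 𝕜} (hA : A.PosSemidef)
    (hB : B.PosSemidef) : 0 ≤ (A * B).trace := by
  classical
  -- `B = Cᴴ C`, so `Tr (A B) = Tr (C A Cᴴ)` with `C A Cᴴ ⪰ 0`.
  obtain ⟨C, rfl⟩ := CStarAlgebra.nonneg_iff_eq_star_mul_self.mp hB.nonneg
  rw [star_eq_conjTranspose, ← mul_assoc, trace_mul_comm]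
  simpa only [mul_assoc] using (hA.mul_mul_conjTranspose_same C).trace_nonneg

theorem PosSemidef.trace_mul_mul_le [DecidableEq n] {Λ S : Matrix n n 𝕜} {r : 𝕜}
    (hΛ : Λ.PosSemidef) (hS : (r • 1 - S * S).PosSemidef) : (S * Λ * S).trace ≤ r * Λ.trace := by
  have := hΛ.trace_mul_nonneg hS
  rw [mul_sub, trace_sub, Matrix.mul_smul, mul_one, trace_smul, smul_eq_mul] at this
  rw [trace_mul_cycle, trace_mul_comm]
  exact sub_nonneg.mp this

end Matrix

theorem stmt17_general
    {L N n : ℕ}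
    (d : Fin L → ℕ)
    (R : (ℓ : Fin L) → Fin N → Matrix (Fin (d ℓ)) (Fin (d ℓ)) ℝ)
    (𝓡 : Set (Fin L → ℝ))
    (h𝓡comp : IsCompact 𝓡)
    (Y : Set (Fin N → ℝ))
    (hY : Y = {y | ∃ r ∈ 𝓡, ∀ ℓ : Fin L,
      (r ℓ • (1 : Matrix (Fin (d ℓ)) (Fin (d ℓ)) ℝ) -
        (∑ i, y i • R ℓ i) * (∑ i, y i • R ℓ i)).PosSemidef})
    (M : Matrix (Fin n) (Fin N) ℝ)
    (Λ : (ℓ : Fin L) → Matrix (Fin (d ℓ)) (Fin (d ℓ)) ℝ)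
    (hΛ : ∀ ℓ, (Λ ℓ).PosSemidef)
    (V : Matrix (Fin n) (Fin n) ℝ)
    (τ : ℝ)
    -- `MᵀVM ⪯ Σ_ℓ 𝓡*_ℓ[Λ_ℓ]`, where `(𝓡*_ℓ[Λ_ℓ])_{ij} = Tr(R^{ℓi} Λ_ℓ R^{ℓj})`
    (hdom : ((∑ ℓ : Fin L, Matrix.of fun i j : Fin N => (R ℓ i * Λ ℓ * R ℓ j).trace)
        - Mᵀ * V * M).PosSemidef)
    -- `φ_𝓡(λ[Λ]) ≤ τ`, with `λ[Λ] = (Tr Λ₁, …, Tr Λ_L)`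
    (hφ : sSup ((fun r : Fin L → ℝ => ∑ ℓ, r ℓ * (Λ ℓ).trace) '' 𝓡) ≤ τ) :
    ∀ y ∈ Y, M.mulVec y ⬝ᵥ V.mulVec (M.mulVec y) ≤ τ := by
  subst hY
  rintro y ⟨r, hr, hS⟩
  have hφ_cont : Continuous fun r : Fin L → ℝ => ∑ ℓ, r ℓ * (Λ ℓ).trace := by fun_prop
  calc M *ᵥ y ⬝ᵥ V *ᵥ (M *ᵥ y)
      = y ⬝ᵥ (Mᵀ * V * M) *ᵥ y := (dotProduct_mulVec_transpose_mul_mul M V y).symm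
    _ ≤ y ⬝ᵥ (∑ ℓ, of fun i j => (R ℓ i * Λ ℓ * R ℓ j).trace) *ᵥ y :=
        hdom.dotProduct_mulVec_le_of_sub y
    _ = ∑ ℓ, ((∑ i, y i • R ℓ i) * Λ ℓ * ∑ i, y i • R ℓ i).trace := by
        simp only [sum_mulVec, dotProduct_sum, dotProduct_mulVec_of_trace_mul_mul]
    _ ≤ ∑ ℓ, r ℓ * (Λ ℓ).trace :=
        Finset.sum_le_sum fun ℓ _ => (hΛ ℓ).trace_mul_mul_le (hS ℓ)
    _ ≤ τ := (le_csSup ((h𝓡comp.image hφ_cont).bddAbove) ⟨r, hr, rfl⟩).trans hφ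

/-- cone compatible with a spectratope: let
`Y = {y : ∃ r ∈ 𝓡, R_ℓ[y]² ⪯ r_ℓ I} `, `X = M·Y`.  If `Λ_ℓ ⪰ 0`,
`MᵀVM ⪯ Σ_ℓ 𝓡*_ℓ[Λ_ℓ]` and `φ_𝓡(λ[Λ]) ≤ τ`, then `xᵀVx ≤ τ` on `X`. -/
theorem stmt17
    {L N n : ℕ} (hL : 0 < L) (hN : 0 < N)
    (d : Fin L → ℕ) (hd : ∀ ℓ, 0 < d ℓ)
    (R : (ℓ : Fin L) → Fin N → Matrix (Fin (d ℓ)) (Fin (d ℓ)) ℝ)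
    (hRsymm : ∀ ℓ i, (R ℓ i).IsSymm)
    (𝓡 : Set (Fin L → ℝ)) (h𝓡ne : 𝓡.Nonempty) (h𝓡conv : Convex ℝ 𝓡)
    (h𝓡comp : IsCompact 𝓡) (h𝓡nonneg : ∀ r ∈ 𝓡, ∀ ℓ, 0 ≤ r ℓ)
    (Y : Set (Fin N → ℝ))
    (hY : Y = {y | ∃ r ∈ 𝓡, ∀ ℓ : Fin L,
      (r ℓ • (1 : Matrix (Fin (d ℓ)) (Fin (d ℓ)) ℝ) -
        (∑ i, y i • R ℓ i) * (∑ i, y i • R ℓ i)).PosSemidef})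
    (M : Matrix (Fin n) (Fin N) ℝ)
    (Λ : (ℓ : Fin L) → Matrix (Fin (d ℓ)) (Fin (d ℓ)) ℝ)
    (hΛ : ∀ ℓ, (Λ ℓ).PosSemidef)
    (V : Matrix (Fin n) (Fin n) ℝ) (hVsymm : V.IsSymm)
    (τ : ℝ) (hτ : 0 ≤ τ)
    -- `MᵀVM ⪯ Σ_ℓ 𝓡*_ℓ[Λ_ℓ]`, where `(𝓡*_ℓ[Λ_ℓ])_{ij} = Tr(R^{ℓi} Λ_ℓ R^{ℓj})`
    (hdom : ((∑ ℓ : Fin L, Matrix.of fun i j : Fin N => (R ℓ i * Λ ℓ * R ℓ j).trace)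
        - Mᵀ * V * M).PosSemidef)
    -- `φ_𝓡(λ[Λ]) ≤ τ`, with `λ[Λ] = (Tr Λ₁, …, Tr Λ_L)`
    (hφ : sSup ((fun r : Fin L → ℝ => ∑ ℓ, r ℓ * (Λ ℓ).trace) '' 𝓡) ≤ τ) :
    ∀ y ∈ Y, M.mulVec y ⬝ᵥ V.mulVec (M.mulVec y) ≤ τ :=
  stmt17_general d R 𝓡 h𝓡comp Y hY M Λ hΛ V τ hdom hφ
end
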